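/- arXiv:2304.14772 — 3 statements merged into one kernel-verified Lean document; each statement's English description precedes it below -/
import Mathlib

section
/- Let q0 and q1 be probability measures on ℝ^d with bounded supports, let q* be the optimal transport plan between q0 and q1 under the quadratic cost, and let q^k be any coupling of the empirical measures of k i.i.d. samples (for fixed samples). Let u_t* and u_t^k be the marginal vector fields of q* and q^k respectively, and let q̃^k be the optimal transport plan between q* and q^k viewed as measures on ℝ^d × ℝ^d (with the quadratic cost on ℝ^{2d}). Then E_{t∼Unif(0,1),(x0,x1,x0',x1')∼q̃^k} ||u_t*(t x1 + (1−t) x0) − u_t^k(t x1' + (1−t) x0')||² ≤ 2 W_2²(q*, q^k). -/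
open MeasureTheory ProbabilityTheory Filter Set
open scoped ENNReal RealInnerProductSpace

section aux
variable {d : ℕ}
local notation "E" => EuclideanSpace ℝ (Fin d)


-- key: condexp identification when f is a.e. a function of ψ
lemma key_condexp (μ : Measure (E × E)) [IsProbabilityMeasure μ]
    (S : Set (E × E)) (hSm : MeasurableSet S) (hSfull : μ Sᶜ = 0)
    (ψ : E × E → E) (hψ : Measurable ψ) (hinj : Set.InjOn ψ S)
    (f : E × E → E) (hf : Measurable f) (hfi : Integrable f μ) :
    MeasureTheory.condExp (MeasurableSpace.comap ψ (by infer_instance)) μ f =ᵐ[μ] f := by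
  haveI : StandardBorelSpace S := hSm.standardBorel
  set φ : S → E := fun z => ψ z.val with hφdef
  have hφm : Measurable φ := hψ.comp measurable_subtype_coe
  have hφinj : Function.Injective φ := by
    intro a b hab
    exact Subtype.ext (hinj a.2 b.2 hab)
  have hemb : MeasurableEmbedding φ := hφm.measurableEmbedding hφinj
  set g : E → E := Function.extend φ (fun z => f z.val) (fun _ => 0) with hgdef
  have hg : Measurable g := hemb.measurable_extend (hf.comp measurable_subtype_coe) measurable_const
  have hae : f =ᵐ[μ] g ∘ ψ := by
    have hS : ∀ᵐ z ∂μ, z ∈ S := by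
      rw [ae_iff]
      exact hSfull
    filter_upwards [hS] with z hz
    have : g (φ ⟨z, hz⟩) = f z := hφinj.extend_apply _ _ _
    simpa [hφdef] using this.symm
  have hm : MeasurableSpace.comap ψ (by infer_instance) ≤ (by infer_instance) := hψ.comap_le
  haveI : SigmaFinite (μ.trim hm) := by infer_instance
  have hASM : AEStronglyMeasurable[MeasurableSpace.comap ψ (by infer_instance)] f μ := by
    refine ⟨g ∘ ψ, ?_, hae⟩
    have : Measurable[MeasurableSpace.comap ψ (by infer_instance)] (g ∘ ψ) :=
      hg.comp (Measurable.of_comap_le le_rfl)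
    exact this.stronglyMeasurable
  exact condExp_of_aestronglyMeasurable' hm hASM hfi


lemma my_fst_add {α β : Type*} [MeasurableSpace α] [MeasurableSpace β]
    (μ ν : Measure (α × β)) : (μ + ν).fst = μ.fst + ν.fst :=
  Measure.map_add _ _ measurable_fst

lemma my_snd_add {α β : Type*} [MeasurableSpace α] [MeasurableSpace β]
    (μ ν : Measure (α × β)) : (μ + ν).snd = μ.snd + ν.snd :=
  Measure.map_add _ _ measurable_snd

lemma my_fst_smul {α β : Type*} [MeasurableSpace α] [MeasurableSpace β]
    (c : ℝ≥0∞) (μ : Measure (α × β)) : (c • μ).fst = c • μ.fst :=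
  Measure.map_smul _ _ _

lemma my_snd_smul {α β : Type*} [MeasurableSpace α] [MeasurableSpace β]
    (c : ℝ≥0∞) (μ : Measure (α × β)) : (c • μ).snd = c • μ.snd :=
  Measure.map_smul _ _ _

lemma integrable_of_ae_bound {α : Type*} [MeasurableSpace α] {μ : Measure α} [IsFiniteMeasure μ]
    {f : α → ℝ} (hf : AEStronglyMeasurable f μ) {M : ℝ} (h : ∀ᵐ x ∂μ, ‖f x‖ ≤ M) :
    Integrable f μ :=
  Integrable.mono' (integrable_const M) hf h


lemma cost_identity (x y x' y' : E) :
    ‖y' - x‖^2 + ‖y - x'‖^2 - (‖y - x‖^2 + ‖y' - x'‖^2) = 2 * ⟪x - x', y - y'⟫ := by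
  simp only [norm_sub_sq_real]
  rw [real_inner_comm x y', real_inner_comm x' y, real_inner_comm x y, real_inner_comm x' y']
  simp only [inner_sub_left, inner_sub_right]
  ring

lemma optimal_mono (μ : Measure (E × E)) [IsProbabilityMeasure μ]
    {C : ℝ} (hbd : ∀ᵐ p ∂μ, ‖p.1‖ ≤ C ∧ ‖p.2‖ ≤ C)
    (hopt : ∀ γ : Measure (E × E), IsProbabilityMeasure γ → γ.fst = μ.fst → γ.snd = μ.snd →
      ∫ p, ‖p.2 - p.1‖^2 ∂μ ≤ ∫ p, ‖p.2 - p.1‖^2 ∂γ) :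
    (μ.prod μ) {w : (E × E) × (E × E) | ⟪w.1.1 - w.2.1, w.1.2 - w.2.2⟫ < 0} = 0 := by
  set c : E × E → ℝ := fun p => ‖p.2 - p.1‖^2 with hcdef
  have hc : Continuous c := by fun_prop
  set A : Set ((E × E) × (E × E)) := {w | ⟪w.1.1 - w.2.1, w.1.2 - w.2.2⟫ < 0} with hAdef
  have hAcont : Continuous fun w : (E × E) × (E × E) => ⟪w.1.1 - w.2.1, w.1.2 - w.2.2⟫ :=
    Continuous.inner ((continuous_fst.fst').sub (continuous_fst.snd'))
      ((continuous_snd.fst').sub (continuous_snd.snd'))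
  haveI : SecondCountableTopology (E × E) := by infer_instance
  haveI : OpensMeasurableSpace ((E × E) × (E × E)) := by infer_instance
  have hAopen : IsOpen A := isOpen_Iio.preimage hAcont
  have hA : MeasurableSet A := hAopen.measurableSet
  by_contra hA0
  set P := μ.prod μ with hPdef
  set ν := P.restrict A with hνdef
  have hs1 : Measurable fun w : (E × E) × (E × E) => (w.1.1, w.2.2) :=
    (measurable_fst.fst.prodMk measurable_snd.snd)
  have hs2 : Measurable fun w : (E × E) × (E × E) => (w.2.1, w.1.2) :=
    (measurable_snd.fst.prodMk measurable_fst.snd)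
  set π1 := ν.map Prod.fst with hπ1def
  set π2 := ν.map Prod.snd with hπ2def
  set σ1 := ν.map (fun w => (w.1.1, w.2.2)) with hσ1def
  set σ2 := ν.map (fun w => (w.2.1, w.1.2)) with hσ2def
  have hνle : ν ≤ P := Measure.restrict_le_self
  have hπ1le : π1 ≤ μ := by
    calc π1 ≤ P.map Prod.fst := Measure.map_mono hνle measurable_fst
    _ = μ := by rw [← Measure.fst, Measure.fst_prod]
  have hπ2le : π2 ≤ μ := by
    calc π2 ≤ P.map Prod.snd := Measure.map_mono hνle measurable_snd
    _ = μ := by rw [← Measure.snd, Measure.snd_prod]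
  set δ := (2:ℝ≥0∞)⁻¹ • π1 + (2:ℝ≥0∞)⁻¹ • π2 with hδdef
  have hδle : δ ≤ μ := by
    rw [Measure.le_iff']
    intro s
    have h1 := Measure.le_iff'.mp hπ1le s
    have h2 := Measure.le_iff'.mp hπ2le s
    calc δ s = 2⁻¹ * π1 s + 2⁻¹ * π2 s := by simp [hδdef]
    _ ≤ 2⁻¹ * μ s + 2⁻¹ * μ s := by gcongr
    _ = μ s := by rw [← add_mul, ENNReal.inv_two_add_inv_two, one_mul]
  haveI : IsFiniteMeasure δ := by
    constructor
    calc δ univ ≤ μ univ := Measure.le_iff'.mp hδle univ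
    _ < ⊤ := by simp
  set ρ := μ - δ with hρdef
  have hρδ : ρ + δ = μ := Measure.sub_add_cancel_of_le hδle
  have hρle : ρ ≤ μ := by
    rw [← hρδ]; exact Measure.le_add_right le_rfl
  set γ := ρ + ((2:ℝ≥0∞)⁻¹ • σ1 + (2:ℝ≥0∞)⁻¹ • σ2) with hγdef
  -- marginals
  have h1fst : σ1.fst = π1.fst := by
    rw [hσ1def, hπ1def, Measure.fst, Measure.fst, Measure.map_map measurable_fst hs1,
      Measure.map_map measurable_fst measurable_fst]
    rfl
  have h2fst : σ2.fst = π2.fst := by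
    rw [hσ2def, hπ2def, Measure.fst, Measure.fst, Measure.map_map measurable_fst hs2,
      Measure.map_map measurable_fst measurable_snd]
    rfl
  have h1snd : σ1.snd = π2.snd := by
    rw [hσ1def, hπ2def, Measure.snd, Measure.snd, Measure.map_map measurable_snd hs1,
      Measure.map_map measurable_snd measurable_snd]
    rfl
  have h2snd : σ2.snd = π1.snd := by
    rw [hσ2def, hπ1def, Measure.snd, Measure.snd, Measure.map_map measurable_snd hs2,
      Measure.map_map measurable_snd measurable_fst]
    rfl
  have hfst : γ.fst = μ.fst := by
    rw [hγdef, ← hρδ, hδdef, my_fst_add, my_fst_add, my_fst_add, my_fst_add, my_fst_smul, my_fst_smul,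
      my_fst_smul, my_fst_smul, h1fst, h2fst]
  have hsnd : γ.snd = μ.snd := by
    rw [hγdef, ← hρδ, hδdef, my_snd_add, my_snd_add, my_snd_add, my_snd_add, my_snd_smul, my_snd_smul,
      my_snd_smul, my_snd_smul, h1snd, h2snd, add_comm ((2:ℝ≥0∞)⁻¹ • π2.snd)]
  haveI hγprob : IsProbabilityMeasure γ := by
    constructor
    rw [← Measure.fst_univ, hfst, Measure.fst_univ, measure_univ]
  -- integrability
  have hCnn : 0 ≤ C := by
    obtain ⟨p, hp⟩ := hbd.exists
    exact le_trans (norm_nonneg _) hp.1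
  have hbd' : ∀ p : E × E, ‖p.1‖ ≤ C → ‖p.2‖ ≤ C → ‖c p‖ ≤ (2*C)^2 := by
    intro p h1 h2
    rw [hcdef]
    simp only [Real.norm_of_nonneg (by positivity : (0:ℝ) ≤ ‖p.2 - p.1‖^2)]
    have : ‖p.2 - p.1‖ ≤ 2*C := by
      calc ‖p.2 - p.1‖ ≤ ‖p.2‖ + ‖p.1‖ := norm_sub_le _ _
      _ ≤ 2*C := by linarith
    exact pow_le_pow_left₀ (norm_nonneg _) this 2
  have hcμ : Integrable c μ := by
    refine integrable_of_ae_bound (M := (2*C)^2) hc.aestronglyMeasurable ?_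
    filter_upwards [hbd] with p hp using hbd' p hp.1 hp.2
  have hbdP : ∀ᵐ w ∂P, (‖w.1.1‖ ≤ C ∧ ‖w.1.2‖ ≤ C) ∧ (‖w.2.1‖ ≤ C ∧ ‖w.2.2‖ ≤ C) := by
    have h1 : ∀ᵐ w : (E × E) × (E × E) ∂P, ‖w.1.1‖ ≤ C ∧ ‖w.1.2‖ ≤ C :=
      Measure.quasiMeasurePreserving_fst.tendsto_ae.eventually hbd
    have h2 : ∀ᵐ w : (E × E) × (E × E) ∂P, ‖w.2.1‖ ≤ C ∧ ‖w.2.2‖ ≤ C :=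
      Measure.quasiMeasurePreserving_snd.tendsto_ae.eventually hbd
    filter_upwards [h1, h2] with w hw1 hw2 using ⟨hw1, hw2⟩
  have hbdν := ae_restrict_of_ae (s := A) hbdP
  have hint1 : Integrable (fun w : (E × E) × (E × E) => c w.1) ν := by
    refine integrable_of_ae_bound (hc.comp continuous_fst).aestronglyMeasurable (M := (2*C)^2) ?_
    filter_upwards [hbdν] with w hw using hbd' w.1 hw.1.1 hw.1.2
  have hint2 : Integrable (fun w : (E × E) × (E × E) => c w.2) ν := by
    refine integrable_of_ae_bound (hc.comp continuous_snd).aestronglyMeasurable (M := (2*C)^2) ?_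
    filter_upwards [hbdν] with w hw using hbd' w.2 hw.2.1 hw.2.2
  have hints1 : Integrable (fun w : (E × E) × (E × E) => c (w.1.1, w.2.2)) ν := by
    refine integrable_of_ae_bound (M := (2*C)^2)
      (hc.comp ((continuous_fst.fst').prodMk (continuous_snd.snd'))).aestronglyMeasurable ?_
    filter_upwards [hbdν] with w hw using hbd' _ hw.1.1 hw.2.2
  have hints2 : Integrable (fun w : (E × E) × (E × E) => c (w.2.1, w.1.2)) ν := by
    refine integrable_of_ae_bound (M := (2*C)^2)
      (hc.comp ((continuous_fst.snd').prodMk (continuous_snd.fst'))).aestronglyMeasurable ?_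
    filter_upwards [hbdν] with w hw using hbd' _ hw.2.1 hw.1.2
  -- integral computations
  have hIπ1 : ∫ p, c p ∂π1 = ∫ w, c w.1 ∂ν := by
    rw [hπ1def, integral_map measurable_fst.aemeasurable hc.aestronglyMeasurable]
  have hIπ2 : ∫ p, c p ∂π2 = ∫ w, c w.2 ∂ν := by
    rw [hπ2def, integral_map measurable_snd.aemeasurable hc.aestronglyMeasurable]
  have hIσ1 : ∫ p, c p ∂σ1 = ∫ w, c (w.1.1, w.2.2) ∂ν := by
    rw [hσ1def, integral_map hs1.aemeasurable hc.aestronglyMeasurable]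
  have hIσ2 : ∫ p, c p ∂σ2 = ∫ w, c (w.2.1, w.1.2) ∂ν := by
    rw [hσ2def, integral_map hs2.aemeasurable hc.aestronglyMeasurable]
  have htoReal : ((2:ℝ≥0∞)⁻¹).toReal = (2:ℝ)⁻¹ := by simp
  have hμsplit : ∫ p, c p ∂μ
      = ∫ p, c p ∂ρ + ((2:ℝ)⁻¹ * ∫ w, c w.1 ∂ν + (2:ℝ)⁻¹ * ∫ w, c w.2 ∂ν) := by
    rw [← hρδ, integral_add_measure (hcμ.mono_measure hρle) (hcμ.mono_measure hδle), hδdef,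
      integral_add_measure ((hcμ.mono_measure hπ1le).smul_measure (by simp))
        ((hcμ.mono_measure hπ2le).smul_measure (by simp)),
      integral_smul_measure, integral_smul_measure, htoReal, hIπ1, hIπ2]
    simp [smul_eq_mul]
  have hγsplit : ∫ p, c p ∂γ
      = ∫ p, c p ∂ρ + ((2:ℝ)⁻¹ * ∫ w, c (w.1.1, w.2.2) ∂ν
        + (2:ℝ)⁻¹ * ∫ w, c (w.2.1, w.1.2) ∂ν) := by
    have hiσ1 : Integrable c σ1 := by
      rw [hσ1def, integrable_map_measure hc.aestronglyMeasurable hs1.aemeasurable]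
      exact hints1
    have hiσ2 : Integrable c σ2 := by
      rw [hσ2def, integrable_map_measure hc.aestronglyMeasurable hs2.aemeasurable]
      exact hints2
    rw [hγdef, integral_add_measure (hcμ.mono_measure hρle)
        ((hiσ1.smul_measure (by simp)).add_measure (hiσ2.smul_measure (by simp))),
      integral_add_measure (hiσ1.smul_measure (by simp)) (hiσ2.smul_measure (by simp)),
      integral_smul_measure, integral_smul_measure, htoReal, hIσ1, hIσ2]
    simp [smul_eq_mul]
  have hkey := hopt γ hγprob hfst hsnd
  rw [hμsplit, hγsplit] at hkey
  have hmain : ∫ w, c w.1 ∂ν + ∫ w, c w.2 ∂ν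
      ≤ ∫ w, c (w.1.1, w.2.2) ∂ν + ∫ w, c (w.2.1, w.1.2) ∂ν := by linarith
  -- pointwise identity and strict inequality
  set g : (E × E) × (E × E) → ℝ := fun w => 2 * ⟪w.1.1 - w.2.1, w.1.2 - w.2.2⟫ with hgdef
  have hgid : ∀ w, g w = c (w.1.1, w.2.2) + c (w.2.1, w.1.2) - (c w.1 + c w.2) := by
    intro w
    have h := cost_identity w.1.1 w.1.2 w.2.1 w.2.2
    simp only [hgdef, hcdef]
    linarith
  have hgint : Integrable g ν := by
    have : g = fun w => c (w.1.1, w.2.2) + c (w.2.1, w.1.2) - (c w.1 + c w.2) :=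
      funext hgid
    rw [this]
    exact (hints1.add hints2).sub (hint1.add hint2)
  have hIab : Integrable (fun w : (E × E) × (E × E) => c (w.1.1, w.2.2) + c (w.2.1, w.1.2)) ν :=
    hints1.add hints2
  have hIcd : Integrable (fun w : (E × E) × (E × E) => c w.1 + c w.2) ν :=
    hint1.add hint2
  have hIg : 0 ≤ ∫ w, g w ∂ν := by
    have : ∫ w, g w ∂ν = (∫ w, c (w.1.1, w.2.2) ∂ν + ∫ w, c (w.2.1, w.1.2) ∂ν)
        - (∫ w, c w.1 ∂ν + ∫ w, c w.2 ∂ν) := by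
      rw [show (fun w => g w) = fun w : (E × E) × (E × E) =>
            (c (w.1.1, w.2.2) + c (w.2.1, w.1.2)) - (c w.1 + c w.2)
          from funext hgid,
        integral_sub hIab hIcd, integral_add hints1 hints2, integral_add hint1 hint2]
    rw [this]
    linarith
  have hnn : 0 ≤ᵐ[ν] fun w => -g w := by
    filter_upwards [ae_restrict_mem hA] with w hw
    have : ⟪w.1.1 - w.2.1, w.1.2 - w.2.2⟫ < 0 := hw
    simp only [hgdef, Pi.zero_apply, neg_nonneg]
    nlinarith
  have hsupp : 0 < ν (Function.support fun w => -g w) := by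
    have hsub : A ⊆ Function.support fun w => -g w := by
      intro w hw
      have : ⟪w.1.1 - w.2.1, w.1.2 - w.2.2⟫ < 0 := hw
      simp only [Function.mem_support, hgdef, ne_eq, neg_eq_zero]
      nlinarith
    have hνA : ν A = P A := by rw [hνdef, Measure.restrict_apply hA, inter_self]
    calc (0:ℝ≥0∞) < ν A := by rw [hνA]; exact zero_lt_iff.mpr hA0
    _ ≤ _ := measure_mono hsub
  have hpos := (integral_pos_iff_support_of_nonneg_ae hnn hgint.neg).mpr hsupp
  rw [integral_neg] at hpos
  linarith


-- existence of a closed, full-measure, monotone set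
lemma exists_mono_closed (μ : Measure (E × E)) [IsProbabilityMeasure μ]
    (h0 : (μ.prod μ) {w : (E × E) × (E × E) | ⟪w.1.1 - w.2.1, w.1.2 - w.2.2⟫ < 0} = 0) :
    ∃ S : Set (E × E), IsClosed S ∧ μ Sᶜ = 0 ∧
      ∀ z ∈ S, ∀ z' ∈ S, 0 ≤ ⟪z.1 - z'.1, z.2 - z'.2⟫ := by
  set S : Set (E × E) := {z | ∀ U ∈ nhds z, μ U ≠ 0} with hSdef
  refine ⟨S, ?_, ?_, ?_⟩
  · rw [← isOpen_compl_iff]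
    rw [isOpen_iff_mem_nhds]
    intro z hz
    simp only [hSdef, mem_compl_iff, mem_setOf_eq, not_forall] at hz
    obtain ⟨U, hU, hU0⟩ := hz
    simp only [not_not] at hU0
    obtain ⟨V, hVU, hVopen, hzV⟩ := mem_nhds_iff.mp hU
    refine Filter.mem_of_superset (hVopen.mem_nhds hzV) ?_
    intro w hw
    simp only [hSdef, mem_compl_iff, mem_setOf_eq, not_forall]
    exact ⟨V, hVopen.mem_nhds hw, by simp [le_antisymm (le_trans (measure_mono hVU) hU0.le) (zero_le)]⟩
  · refine measure_null_of_locally_null _ ?_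
    intro z hz
    simp only [hSdef, mem_compl_iff, mem_setOf_eq, not_forall] at hz
    obtain ⟨U, hU, hU0⟩ := hz
    simp only [not_not] at hU0
    exact ⟨U, mem_nhdsWithin_of_mem_nhds hU, hU0⟩
  · intro z hz z' hz'
    by_contra hneg
    push_neg at hneg
    have hAcont : Continuous fun w : (E × E) × (E × E) => ⟪w.1.1 - w.2.1, w.1.2 - w.2.2⟫ :=
      Continuous.inner ((continuous_fst.fst').sub (continuous_fst.snd'))
        ((continuous_snd.fst').sub (continuous_snd.snd'))
    have hAopen : IsOpen {w : (E × E) × (E × E) | ⟪w.1.1 - w.2.1, w.1.2 - w.2.2⟫ < 0} :=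
      isOpen_Iio.preimage hAcont
    have hmem : (z, z') ∈ {w : (E × E) × (E × E) | ⟪w.1.1 - w.2.1, w.1.2 - w.2.2⟫ < 0} := hneg
    obtain ⟨U, V, hUopen, hVopen, hzU, hz'V, hUV⟩ := isOpen_prod_iff.mp hAopen z z' hmem
    have : (μ.prod μ) (U ×ˢ V) = 0 :=
      le_antisymm (le_trans (measure_mono hUV) h0.le) (zero_le)
    rw [Measure.prod_prod] at this
    rcases mul_eq_zero.mp this with h | h
    · exact hz U (hUopen.mem_nhds hzU) h
    · exact hz' V (hVopen.mem_nhds hz'V) h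

-- injectivity of interpolation on monotone sets, 0 < t < 1
lemma inj_interp {S : Set (E × E)}
    (hmono : ∀ z ∈ S, ∀ z' ∈ S, 0 ≤ ⟪z.1 - z'.1, z.2 - z'.2⟫)
    {t : ℝ} (ht : t ∈ Ioo (0:ℝ) 1) :
    Set.InjOn (fun p : E × E => (1-t) • p.1 + t • p.2) S := by
  intro z hz z' hz' heq
  simp only at heq
  set u := z.1 - z'.1 with hu
  set v := z.2 - z'.2 with hv
  have hlin : (1-t) • u + t • v = 0 := by
    rw [hu, hv, smul_sub, smul_sub]
    rw [sub_add_sub_comm, heq, sub_self]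
  have hvz : v = 0 := by
    have h1 : (1-t) • u = -(t • v) := by
      rw [eq_neg_iff_add_eq_zero]; exact hlin
    have h2 : ⟪(1-t) • u, v⟫ = -(t * ‖v‖^2) := by
      rw [h1, inner_neg_left, real_inner_smul_left, real_inner_self_eq_norm_sq]
    have h3 : 0 ≤ ⟪u, v⟫ := hmono z hz z' hz'
    rw [real_inner_smul_left] at h2
    have ht1 : 0 < 1 - t := by linarith [ht.2]
    have : 0 ≤ -(t * ‖v‖^2) := by
      rw [← h2]; positivity
    have hn : ‖v‖^2 ≤ 0 := by
      nlinarith [ht.1]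
    have : ‖v‖ = 0 := by nlinarith [norm_nonneg v, sq_nonneg ‖v‖]
    exact norm_eq_zero.mp this
  have huz : u = 0 := by
    rw [hvz, smul_zero, add_zero] at hlin
    have := smul_eq_zero.mp hlin
    rcases this with h | h
    · exfalso; have : (1:ℝ) - t ≠ 0 := by linarith [ht.2]
      exact this h
    · exact h
  have h1 : z.1 = z'.1 := by rwa [hu, sub_eq_zero] at huz
  have h2 : z.2 = z'.2 := by rwa [hv, sub_eq_zero] at hvz
  exact Prod.ext h1 h2

-- the set of bad times for a finite set is countable
lemma bad_t_countable {F : Set (E × E)} (hF : F.Finite) :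
    {t : ℝ | ¬ Set.InjOn (fun p : E × E => (1-t) • p.1 + t • p.2) F}.Countable := by
  have hsub : {t : ℝ | ¬ Set.InjOn (fun p : E × E => (1-t) • p.1 + t • p.2) F}
      ⊆ ⋃ z ∈ F, ⋃ z' ∈ F,
        {t : ℝ | z ≠ z' ∧ (1-t) • z.1 + t • z.2 = (1-t) • z'.1 + t • z'.2} := by
    intro t ht
    simp only [Set.InjOn, not_forall] at ht
    obtain ⟨z, hz, z', hz', heq, hne⟩ := ht
    simp only [mem_iUnion]
    exact ⟨z, hz, z', hz', hne, heq⟩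
  refine Set.Countable.mono hsub ?_
  refine Set.Countable.biUnion hF.countable fun z hz => ?_
  refine Set.Countable.biUnion hF.countable fun z' hz' => ?_
  apply Set.Subsingleton.countable
  intro t ht t' ht'
  obtain ⟨hne, he⟩ := ht
  obtain ⟨_, he'⟩ := ht'
  by_contra htt
  set u := z.1 - z'.1 with hu
  set v := z.2 - z'.2 with hv
  have h1 : (1-t) • u + t • v = 0 := by
    rw [hu, hv, smul_sub, smul_sub, sub_add_sub_comm, he, sub_self]
  have h2 : (1-t') • u + t' • v = 0 := by
    rw [hu, hv, smul_sub, smul_sub, sub_add_sub_comm, he', sub_self]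
  have h3 : (t - t') • (v - u) = 0 := by
    have := sub_eq_zero.mpr (h1.trans h2.symm)
    rw [← this]
    simp only [sub_smul, smul_sub, one_smul]
    abel
  have h4 : v = u := by
    rcases smul_eq_zero.mp h3 with h | h
    · exact absurd (sub_eq_zero.mp h) htt
    · exact sub_eq_zero.mp h
  have h5 : u = 0 := by
    rw [h4] at h1
    rw [← add_smul] at h1
    simp only [sub_add_cancel, one_smul] at h1
    exact h1
  have h6 : v = 0 := by rw [h4, h5]
  exact hne (Prod.ext (by rwa [hu, sub_eq_zero] at h5) (by rwa [hv, sub_eq_zero] at h6))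



lemma diff_sq_le (a1 a2 b1 b2 : E) :
    ‖(a2 - a1) - (b2 - b1)‖^2 ≤ 2*(‖a1 - b1‖^2 + ‖a2 - b2‖^2) := by
  have h : (a2 - a1) - (b2 - b1) = (a2 - b2) - (a1 - b1) := by abel
  rw [h]
  have h2 := norm_sub_le (a2 - b2) (a1 - b1)
  have h3 : ‖a2 - b2 - (a1 - b1)‖^2 ≤ (‖a2 - b2‖ + ‖a1 - b1‖)^2 :=
    pow_le_pow_left₀ (norm_nonneg _) h2 2
  nlinarith [sq_nonneg (‖a2-b2‖ - ‖a1-b1‖)]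




theorem main_inner {k : ℕ} (hk : 0 < k)
    (q0 q1 : Measure E)
    [IsProbabilityMeasure q0] [IsProbabilityMeasure q1]
    (hbd0 : ∃ R : ℝ, q0 ((Metric.closedBall 0 R)ᶜ) = 0)
    (hbd1 : ∃ R : ℝ, q1 ((Metric.closedBall 0 R)ᶜ) = 0)
    (qstar : Measure (E × E))
    [IsProbabilityMeasure qstar]
    (hqstar_fst : qstar.fst = q0) (hqstar_snd : qstar.snd = q1)
    (hqstar_opt : ∀ γ : Measure (E × E),
      IsProbabilityMeasure γ → γ.fst = q0 → γ.snd = q1 →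
      ∫ p, ‖p.2 - p.1‖^2 ∂qstar ≤ ∫ p, ‖p.2 - p.1‖^2 ∂γ)
    (x0s x1s : Fin k → E)
    (emp0 emp1 : Measure E)
    (hemp0 : emp0 = (k : ℝ≥0∞)⁻¹ • ∑ i : Fin k, Measure.dirac (x0s i))
    (hemp1 : emp1 = (k : ℝ≥0∞)⁻¹ • ∑ i : Fin k, Measure.dirac (x1s i))
    (qk : Measure (E × E))
    [IsProbabilityMeasure qk]
    (hqk_fst : qk.fst = emp0) (hqk_snd : qk.snd = emp1)
    (ustar uk : ℝ → E → E)
    (hustar : ∀ t ∈ Set.Icc (0:ℝ) 1,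
      (fun p : E × E => ustar t ((1-t) • p.1 + t • p.2))
        =ᵐ[qstar] MeasureTheory.condExp
          (MeasurableSpace.comap (fun p : E × E => (1-t) • p.1 + t • p.2) (by infer_instance))
          qstar (fun p => p.2 - p.1))
    (huk : ∀ t ∈ Set.Icc (0:ℝ) 1,
      (fun p : E × E => uk t ((1-t) • p.1 + t • p.2))
        =ᵐ[qk] MeasureTheory.condExp
          (MeasurableSpace.comap (fun p : E × E => (1-t) • p.1 + t • p.2) (by infer_instance))
          qk (fun p => p.2 - p.1))
    (qtilde : Measure ((E × E) × (E × E)))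
    [IsProbabilityMeasure qtilde]
    (hqtilde_fst : qtilde.fst = qstar) (hqtilde_snd : qtilde.snd = qk) :
    ∫ t in Set.Ioc (0:ℝ) 1,
        ∫ z, ‖ustar t (t • z.1.2 + (1-t) • z.1.1) -
            uk t (t • z.2.2 + (1-t) • z.2.1)‖^2 ∂qtilde ≤
      2 * ∫ z, (‖z.1.1 - z.2.1‖^2 + ‖z.1.2 - z.2.2‖^2) ∂qtilde := by
  classical
  haveI : SecondCountableTopology (E × E) := by infer_instance
  haveI : OpensMeasurableSpace ((E × E) × (E × E)) := by infer_instance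
  obtain ⟨R0, hR0⟩ := hbd0
  obtain ⟨R1, hR1⟩ := hbd1
  set C := max R0 R1 with hCdef
  -- a.e. bound for qstar
  have hbdstar : ∀ᵐ p ∂qstar, ‖p.1‖ ≤ C ∧ ‖p.2‖ ≤ C := by
    have h1 : qstar (Prod.fst ⁻¹' (Metric.closedBall (0:E) R0)ᶜ) = 0 := by
      rw [← Measure.fst_apply measurableSet_closedBall.compl, hqstar_fst]
      exact hR0
    have h2 : qstar (Prod.snd ⁻¹' (Metric.closedBall (0:E) R1)ᶜ) = 0 := by
      rw [← Measure.snd_apply measurableSet_closedBall.compl, hqstar_snd]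
      exact hR1
    have h1' : ∀ᵐ p : E × E ∂qstar, p.1 ∈ Metric.closedBall (0:E) R0 := by
      rw [ae_iff]; exact h1
    have h2' : ∀ᵐ p : E × E ∂qstar, p.2 ∈ Metric.closedBall (0:E) R1 := by
      rw [ae_iff]; exact h2
    filter_upwards [h1', h2'] with p hp1 hp2
    rw [Metric.mem_closedBall, dist_zero_right] at hp1 hp2
    exact ⟨le_trans hp1 (le_max_left _ _), le_trans hp2 (le_max_right _ _)⟩
  -- finite support of qk
  set F : Set (E × E) := (Set.range x0s) ×ˢ (Set.range x1s) with hFdef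
  have hFfin : F.Finite := (Set.finite_range x0s).prod (Set.finite_range x1s)
  have hFclosed : IsClosed F := hFfin.isClosed
  have hqkF : qk Fᶜ = 0 := by
    have hsub : Fᶜ ⊆ (Prod.fst ⁻¹' (Set.range x0s)ᶜ) ∪ (Prod.snd ⁻¹' (Set.range x1s)ᶜ) := by
      intro p hp
      by_contra hcon
      simp only [mem_union, mem_preimage, mem_compl_iff, not_or, not_not] at hcon
      exact hp ⟨hcon.1, hcon.2⟩
    refine measure_mono_null hsub (measure_union_null ?_ ?_)
    · rw [← Measure.fst_apply ((Set.finite_range x0s).measurableSet.compl), hqk_fst, hemp0]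
      simp only [Measure.smul_apply, Measure.finset_sum_apply, smul_eq_mul]
      have : ∀ i : Fin k, Measure.dirac (x0s i) ((Set.range x0s)ᶜ) = 0 := by
        intro i
        rw [Measure.dirac_apply' _ ((Set.finite_range x0s).measurableSet.compl)]
        simp [Set.indicator_of_notMem, Set.mem_range_self]
      simp [this]
    · rw [← Measure.snd_apply ((Set.finite_range x1s).measurableSet.compl), hqk_snd, hemp1]
      simp only [Measure.smul_apply, Measure.finset_sum_apply, smul_eq_mul]
      have : ∀ i : Fin k, Measure.dirac (x1s i) ((Set.range x1s)ᶜ) = 0 := by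
        intro i
        rw [Measure.dirac_apply' _ ((Set.finite_range x1s).measurableSet.compl)]
        simp [Set.indicator_of_notMem, Set.mem_range_self]
      simp [this]
  have hqkFae : ∀ᵐ p ∂qk, p ∈ F := by rw [ae_iff]; exact hqkF
  -- bound for F
  obtain ⟨C0, hC0⟩ := (Set.finite_range x0s).isBounded.subset_closedBall (0:E)
  obtain ⟨C1, hC1⟩ := (Set.finite_range x1s).isBounded.subset_closedBall (0:E)
  set CF := max C0 C1 with hCFdef
  have hCF : ∀ z ∈ F, ‖z.1‖ ≤ CF ∧ ‖z.2‖ ≤ CF := by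
    intro z hz
    have h1 := hC0 hz.1
    have h2 := hC1 hz.2
    rw [Metric.mem_closedBall, dist_zero_right] at h1 h2
    exact ⟨le_trans h1 (le_max_left _ _), le_trans h2 (le_max_right _ _)⟩
  have hbdk : ∀ᵐ p ∂qk, ‖p.1‖ ≤ CF ∧ ‖p.2‖ ≤ CF := by
    filter_upwards [hqkFae] with p hp using hCF p hp
  -- f and its integrability
  set f : E × E → E := fun p => p.2 - p.1 with hfdef
  have hfcont : Continuous f := continuous_snd.sub continuous_fst
  have hfmeas : Measurable f := hfcont.measurable
  have hfint_star : Integrable f qstar := by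
    refine Integrable.mono' (integrable_const (2*C)) hfcont.aestronglyMeasurable ?_
    filter_upwards [hbdstar] with p hp
    calc ‖f p‖ ≤ ‖p.2‖ + ‖p.1‖ := norm_sub_le _ _
    _ ≤ 2*C := by linarith [hp.1, hp.2]
  have hfint_k : Integrable f qk := by
    refine Integrable.mono' (integrable_const (2*CF)) hfcont.aestronglyMeasurable ?_
    filter_upwards [hbdk] with p hp
    calc ‖f p‖ ≤ ‖p.2‖ + ‖p.1‖ := norm_sub_le _ _
    _ ≤ 2*CF := by linarith [hp.1, hp.2]
  -- monotone closed support for qstar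
  have hopt' : ∀ γ : Measure (E × E), IsProbabilityMeasure γ → γ.fst = qstar.fst →
      γ.snd = qstar.snd → ∫ p, ‖p.2 - p.1‖^2 ∂qstar ≤ ∫ p, ‖p.2 - p.1‖^2 ∂γ := by
    intro γ hγ h1 h2
    exact hqstar_opt γ hγ (by rw [h1, hqstar_fst]) (by rw [h2, hqstar_snd])
  have hmono0 := optimal_mono qstar hbdstar hopt'
  obtain ⟨S, hSclosed, hSfull, hSmono⟩ := exists_mono_closed qstar hmono0
  -- quasi measure preserving projections
  have hQ1 : Measure.QuasiMeasurePreserving Prod.fst qtilde qstar := by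
    refine ⟨measurable_fst, ?_⟩
    have : qtilde.map Prod.fst = qstar := hqtilde_fst
    rw [this]
  have hQ2 : Measure.QuasiMeasurePreserving Prod.snd qtilde qk := by
    refine ⟨measurable_snd, ?_⟩
    have : qtilde.map Prod.snd = qk := hqtilde_snd
    rw [this]
  -- cost integrability
  set cost : (E × E) × (E × E) → ℝ := fun z => ‖z.1.1 - z.2.1‖^2 + ‖z.1.2 - z.2.2‖^2
    with hcostdef
  have hcostcont : Continuous cost := by
    apply Continuous.add
    · exact (((continuous_fst.fst').sub (continuous_fst.snd')).norm).pow 2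
    · exact (((continuous_snd.fst').sub (continuous_snd.snd')).norm).pow 2
  have hbdtilde : ∀ᵐ z : (E × E) × (E × E) ∂qtilde,
      (‖z.1.1‖ ≤ C ∧ ‖z.1.2‖ ≤ C) ∧ (‖z.2.1‖ ≤ CF ∧ ‖z.2.2‖ ≤ CF) := by
    have h1 := hQ1.tendsto_ae.eventually hbdstar
    have h2 := hQ2.tendsto_ae.eventually hbdk
    filter_upwards [h1, h2] with z hz1 hz2 using ⟨hz1, hz2⟩
  have hcostint : Integrable cost qtilde := by
    refine Integrable.mono' (integrable_const ((C+CF)^2 + (C+CF)^2))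
      hcostcont.aestronglyMeasurable ?_
    filter_upwards [hbdtilde] with z hz
    have e1 : ‖z.1.1 - z.2.1‖ ≤ C + CF := by
      calc ‖z.1.1 - z.2.1‖ ≤ ‖z.1.1‖ + ‖z.2.1‖ := norm_sub_le _ _
      _ ≤ C + CF := add_le_add hz.1.1 hz.2.1
    have e2 : ‖z.1.2 - z.2.2‖ ≤ C + CF := by
      calc ‖z.1.2 - z.2.2‖ ≤ ‖z.1.2‖ + ‖z.2.2‖ := norm_sub_le _ _
      _ ≤ C + CF := add_le_add hz.1.2 hz.2.2
    have p1 : ‖z.1.1 - z.2.1‖^2 ≤ (C+CF)^2 := pow_le_pow_left₀ (norm_nonneg _) e1 2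
    have p2 : ‖z.1.2 - z.2.2‖^2 ≤ (C+CF)^2 := pow_le_pow_left₀ (norm_nonneg _) e2 2
    have hcz : cost z = ‖z.1.1 - z.2.1‖^2 + ‖z.1.2 - z.2.2‖^2 := rfl
    rw [Real.norm_of_nonneg (by rw [hcz]; positivity), hcz]
    linarith
  set Ccost := ∫ z, cost z ∂qtilde with hCcostdef
  have hCcost0 : 0 ≤ Ccost := integral_nonneg fun z => by
    have hcz : cost z = ‖z.1.1 - z.2.1‖^2 + ‖z.1.2 - z.2.2‖^2 := rfl
    rw [hcz]; positivity
  -- per-t inner bound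
  have inner_bound : ∀ t ∈ Ioo (0:ℝ) 1,
      Set.InjOn (fun p : E × E => (1-t) • p.1 + t • p.2) F →
      (∫ z, ‖ustar t (t • z.1.2 + (1-t) • z.1.1) -
          uk t (t • z.2.2 + (1-t) • z.2.1)‖^2 ∂qtilde) ≤ 2 * Ccost := by
    intro t ht htF
    have htIcc : t ∈ Icc (0:ℝ) 1 := ⟨ht.1.le, ht.2.le⟩
    set ψ : E × E → E := fun p => (1-t) • p.1 + t • p.2 with hψdef
    have hψm : Measurable ψ := by
      apply Measurable.add
      · exact (measurable_fst.const_smul (1-t))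
      · exact (measurable_snd.const_smul t)
    have hkey1 := key_condexp qstar S hSclosed.measurableSet hSfull ψ hψm
      (inj_interp hSmono ht) f hfmeas hfint_star
    have hkey2 := key_condexp qk F hFclosed.measurableSet hqkF ψ hψm htF f hfmeas hfint_k
    have hstar : (fun p : E × E => ustar t ((1-t) • p.1 + t • p.2)) =ᵐ[qstar] f :=
      (hustar t htIcc).trans hkey1
    have huk' : (fun p : E × E => uk t ((1-t) • p.1 + t • p.2)) =ᵐ[qk] f :=
      (huk t htIcc).trans hkey2
    have hstar' := hQ1.tendsto_ae.eventually hstar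
    have huk'' := hQ2.tendsto_ae.eventually huk'
    have heq : ∀ᵐ z : (E × E) × (E × E) ∂qtilde,
        ‖ustar t (t • z.1.2 + (1-t) • z.1.1) - uk t (t • z.2.2 + (1-t) • z.2.1)‖^2
          = ‖(z.1.2 - z.1.1) - (z.2.2 - z.2.1)‖^2 := by
      filter_upwards [hstar', huk''] with z e1 e2
      rw [add_comm (t • z.1.2) ((1-t) • z.1.1), add_comm (t • z.2.2) ((1-t) • z.2.1)]
      rw [show ustar t ((1-t) • z.1.1 + t • z.1.2) = f z.1 from e1,
        show uk t ((1-t) • z.2.1 + t • z.2.2) = f z.2 from e2]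
    rw [integral_congr_ae heq]
    have hint2 : Integrable (fun z : (E × E) × (E × E) => 2 * cost z) qtilde :=
      hcostint.const_mul 2
    have hint1 : Integrable (fun z : (E × E) × (E × E) =>
        ‖(z.1.2 - z.1.1) - (z.2.2 - z.2.1)‖^2) qtilde := by
      refine Integrable.mono' hint2 ?_ ?_
      · exact ((((continuous_snd.fst').sub (continuous_fst.fst')).sub
          ((continuous_snd.snd').sub (continuous_fst.snd'))).norm.pow 2).aestronglyMeasurable
      · refine Eventually.of_forall fun z => ?_
        rw [Real.norm_of_nonneg (by positivity)]
        have h := diff_sq_le z.1.1 z.1.2 z.2.1 z.2.2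
        have hcz : cost z = ‖z.1.1 - z.2.1‖^2 + ‖z.1.2 - z.2.2‖^2 := rfl
        rw [hcz]
        linarith
    calc ∫ z, ‖(z.1.2 - z.1.1) - (z.2.2 - z.2.1)‖^2 ∂qtilde
        ≤ ∫ z, 2 * cost z ∂qtilde := by
          refine integral_mono hint1 hint2 fun z => ?_
          have h := diff_sq_le z.1.1 z.1.2 z.2.1 z.2.2
          have hcz : cost z = ‖z.1.1 - z.2.1‖^2 + ‖z.1.2 - z.2.2‖^2 := rfl
          rw [hcz]
          linarith
    _ = 2 * Ccost := by rw [integral_const_mul]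
  -- bad time set
  have hTbad := bad_t_countable hFfin
  have hae_t : ∀ᵐ t ∂(volume.restrict (Ioc (0:ℝ) 1)),
      t ∈ Ioo (0:ℝ) 1 ∧ Set.InjOn (fun p : E × E => (1-t) • p.1 + t • p.2) F := by
    have h1 : ∀ᵐ t ∂(volume.restrict (Ioc (0:ℝ) 1)), t ∈ Ioc (0:ℝ) 1 :=
      ae_restrict_mem measurableSet_Ioc
    have h2 : ∀ᵐ t : ℝ ∂volume,
        t ∉ ({t : ℝ | ¬ Set.InjOn (fun p : E × E => (1-t) • p.1 + t • p.2) F} ∪ {1}) := by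
      have hz : volume ({t : ℝ | ¬ Set.InjOn (fun p : E × E => (1-t) • p.1 + t • p.2) F}
          ∪ {1}) = 0 := (hTbad.union (countable_singleton 1)).measure_zero _
      exact measure_eq_zero_iff_ae_notMem.mp hz
    have h2' := ae_restrict_of_ae (s := Ioc (0:ℝ) 1) h2
    filter_upwards [h1, h2'] with t h1t h2t
    simp only [mem_union, mem_setOf_eq, mem_singleton_iff, not_or, not_not] at h2t
    exact ⟨⟨h1t.1, lt_of_le_of_ne h1t.2 h2t.2⟩, h2t.1⟩
  -- conclude
  by_cases hI : IntegrableOn (fun t => ∫ z, ‖ustar t (t • z.1.2 + (1-t) • z.1.1) -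
      uk t (t • z.2.2 + (1-t) • z.2.1)‖^2 ∂qtilde) (Ioc (0:ℝ) 1) volume
  · have hconst : Integrable (fun _ : ℝ => 2 * Ccost) (volume.restrict (Ioc (0:ℝ) 1)) := by
      refine integrable_const _
    have hle : (fun t => ∫ z, ‖ustar t (t • z.1.2 + (1-t) • z.1.1) -
        uk t (t • z.2.2 + (1-t) • z.2.1)‖^2 ∂qtilde)
        ≤ᵐ[volume.restrict (Ioc (0:ℝ) 1)] fun _ => 2 * Ccost := by
      filter_upwards [hae_t] with t ht
      exact inner_bound t ht.1 ht.2
    calc ∫ t in Ioc (0:ℝ) 1, ∫ z, ‖ustar t (t • z.1.2 + (1-t) • z.1.1) -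
          uk t (t • z.2.2 + (1-t) • z.2.1)‖^2 ∂qtilde
        ≤ ∫ _t in Ioc (0:ℝ) 1, 2 * Ccost := integral_mono_ae hI hconst hle
    _ = 2 * Ccost := by
        rw [setIntegral_const]
        simp [Real.volume_Ioc]
  · rw [integral_undef hI]
    positivity

end aux

/-- Let `q*` be the optimal transport plan between `q0` and `q1` (quadratic
cost) and `q^k` any coupling of two empirical measures of `k` samples.  Let `u*` and `u^k` be
the marginal vector fields of `q*`, `q^k`, and let `q̃^k` be an optimal transport plan between
`q*` and `q^k` on `ℝ^{2d}` (quadratic cost).  Then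
`E_{t,(x0,x1,x0',x1')∼q̃^k} ‖u*_t(t x1 + (1−t)x0) − u^k_t(t x1' + (1−t)x0')‖² ≤ 2 W_2²(q*, q^k)`
(the right-hand side being twice the cost of the optimal plan `q̃^k`). -/
theorem marginal_field_discrepancy_bound
    {d k : ℕ} (hk : 0 < k)
    (q0 q1 : Measure (EuclideanSpace ℝ (Fin d)))
    [IsProbabilityMeasure q0] [IsProbabilityMeasure q1]
    -- bounded supports
    (hbd0 : ∃ R : ℝ, q0 ((Metric.closedBall 0 R)ᶜ) = 0)
    (hbd1 : ∃ R : ℝ, q1 ((Metric.closedBall 0 R)ᶜ) = 0)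
    -- the optimal transport plan `q*` between `q0` and `q1`
    (qstar : Measure (EuclideanSpace ℝ (Fin d) × EuclideanSpace ℝ (Fin d)))
    [IsProbabilityMeasure qstar]
    (hqstar_fst : qstar.fst = q0) (hqstar_snd : qstar.snd = q1)
    (hqstar_opt : ∀ γ : Measure (EuclideanSpace ℝ (Fin d) × EuclideanSpace ℝ (Fin d)),
      IsProbabilityMeasure γ → γ.fst = q0 → γ.snd = q1 →
      ∫ p, ‖p.2 - p.1‖^2 ∂qstar ≤ ∫ p, ‖p.2 - p.1‖^2 ∂γ)
    -- fixed samples and their empirical measures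
    (x0s x1s : Fin k → EuclideanSpace ℝ (Fin d))
    (emp0 emp1 : Measure (EuclideanSpace ℝ (Fin d)))
    (hemp0 : emp0 = (k : ℝ≥0∞)⁻¹ • ∑ i : Fin k, Measure.dirac (x0s i))
    (hemp1 : emp1 = (k : ℝ≥0∞)⁻¹ • ∑ i : Fin k, Measure.dirac (x1s i))
    -- `q^k` is a coupling of the empirical measures
    (qk : Measure (EuclideanSpace ℝ (Fin d) × EuclideanSpace ℝ (Fin d)))
    [IsProbabilityMeasure qk]
    (hqk_fst : qk.fst = emp0) (hqk_snd : qk.snd = emp1)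
    -- `u*` and `u^k` are the marginal vector fields of `q*` and `q^k`
    (ustar uk : ℝ → EuclideanSpace ℝ (Fin d) → EuclideanSpace ℝ (Fin d))
    (hustar : ∀ t ∈ Set.Icc (0:ℝ) 1,
      (fun p : EuclideanSpace ℝ (Fin d) × EuclideanSpace ℝ (Fin d) =>
          ustar t ((1-t) • p.1 + t • p.2))
        =ᵐ[qstar] MeasureTheory.condExp
          (MeasurableSpace.comap
            (fun p : EuclideanSpace ℝ (Fin d) × EuclideanSpace ℝ (Fin d) =>
              (1-t) • p.1 + t • p.2) (by infer_instance))
          qstar (fun p => p.2 - p.1))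
    (huk : ∀ t ∈ Set.Icc (0:ℝ) 1,
      (fun p : EuclideanSpace ℝ (Fin d) × EuclideanSpace ℝ (Fin d) =>
          uk t ((1-t) • p.1 + t • p.2))
        =ᵐ[qk] MeasureTheory.condExp
          (MeasurableSpace.comap
            (fun p : EuclideanSpace ℝ (Fin d) × EuclideanSpace ℝ (Fin d) =>
              (1-t) • p.1 + t • p.2) (by infer_instance))
          qk (fun p => p.2 - p.1))
    -- `q̃^k` is an optimal transport plan between `q*` and `q^k` on `ℝ^{2d}`
    (qtilde : Measure ((EuclideanSpace ℝ (Fin d) × EuclideanSpace ℝ (Fin d)) ×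
      (EuclideanSpace ℝ (Fin d) × EuclideanSpace ℝ (Fin d))))
    [IsProbabilityMeasure qtilde]
    (hqtilde_fst : qtilde.fst = qstar) (hqtilde_snd : qtilde.snd = qk)
    (hqtilde_opt : ∀ γ : Measure ((EuclideanSpace ℝ (Fin d) × EuclideanSpace ℝ (Fin d)) ×
        (EuclideanSpace ℝ (Fin d) × EuclideanSpace ℝ (Fin d))),
      IsProbabilityMeasure γ → γ.fst = qstar → γ.snd = qk →
      ∫ z, (‖z.1.1 - z.2.1‖^2 + ‖z.1.2 - z.2.2‖^2) ∂qtilde ≤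
        ∫ z, (‖z.1.1 - z.2.1‖^2 + ‖z.1.2 - z.2.2‖^2) ∂γ) :
    ∫ t in Set.Ioc (0:ℝ) 1,
        ∫ z, ‖ustar t (t • z.1.2 + (1-t) • z.1.1) -
            uk t (t • z.2.2 + (1-t) • z.2.1)‖^2 ∂qtilde ≤
      2 * ∫ z, (‖z.1.1 - z.2.1‖^2 + ‖z.1.2 - z.2.2‖^2) ∂qtilde := by
  exact main_inner hk q0 q1 hbd0 hbd1 qstar hqstar_fst hqstar_snd hqstar_opt x0s x1s
    emp0 emp1 hemp0 hemp1 qk hqk_fst hqk_snd ustar uk hustar huk qtilde hqtilde_fst hqtilde_snd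
end

section
/- Let q0 and q1 be probability measures on ℝ^d and let q be any coupling of q0 and q1 with finite second moments. Let u_t(x) = E_q[x1 − x0 | t x1 + (1−t) x0 = x] be the marginal vector field and φ_t its flow. Then the transport cost of the flow map is bounded by the expected cost of the coupling: E_{x0∼q0} ||φ_1(x0) − x0||² ≤ E_{(x0,x1)∼q} ||x1 − x0||². -/
set_option maxHeartbeats 1000000

open MeasureTheory ProbabilityTheory Filter
open scoped ENNReal Topology

lemma aux_le_one_add_sq (a : ℝ≥0∞) : a ≤ 1 + a ^ 2 := by
  rcases le_total a 1 with h | h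
  · exact h.trans le_self_add
  · calc a = a * 1 := (mul_one a).symm
      _ ≤ a * a := by exact mul_le_mul_right h a
      _ ≤ 1 + a ^ 2 := by rw [← sq]; exact le_add_self

lemma aux_cs {α : Type*} [MeasurableSpace α] (μ : Measure α) (hμ : μ Set.univ = 1)
    {f : α → ℝ≥0∞} (hf : AEMeasurable f μ) :
    (∫⁻ a, f a ∂μ) ^ 2 ≤ ∫⁻ a, f a ^ 2 ∂μ := by
  have hconj : (2:ℝ).HolderConjugate 2 := Real.HolderConjugate.two_two
  have h := ENNReal.lintegral_mul_le_Lp_mul_Lq μ hconj hf aemeasurable_const (g := fun _ => 1)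
  simp only [Pi.mul_apply, mul_one, ENNReal.one_rpow, lintegral_const, hμ, one_mul,
    ENNReal.one_rpow] at h
  have h2 : (∫⁻ a, f a ∂μ) ^ 2 ≤ ((∫⁻ a, f a ^ (2:ℝ) ∂μ) ^ ((1:ℝ)/2)) ^ 2 :=
    pow_le_pow_left' h 2
  refine h2.trans_eq ?_
  rw [← ENNReal.rpow_natCast (((∫⁻ a, f a ^ (2:ℝ) ∂μ)) ^ ((1:ℝ)/2)) 2, ← ENNReal.rpow_mul]
  norm_num

lemma aux_condexp_sq {α : Type*} {m m0 : MeasurableSpace α} (hm : m ≤ m0)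
    {μ : Measure α} [IsFiniteMeasure μ]
    {E : Type*} [NormedAddCommGroup E] [InnerProductSpace ℝ E] [CompleteSpace E]
    {f : α → E} (hf : MemLp f 2 μ) :
    ∫⁻ a, (‖(μ[f|m]) a‖₊ : ℝ≥0∞) ^ 2 ∂μ ≤ ∫⁻ a, (‖f a‖₊ : ℝ≥0∞) ^ 2 ∂μ := by
  haveI : SigmaFinite (μ.trim hm) := by
    haveI : IsFiniteMeasure (μ.trim hm) := isFiniteMeasure_trim hm
    infer_instance
  set F := hf.toLp f with hF
  have hcoe : ⇑F =ᵐ[μ] f := hf.coeFn_toLp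
  have h1 : (condExpL2 E ℝ hm F : α → E) =ᵐ[μ] μ[f|m] :=
    ae_eq_condExp_of_forall_setIntegral_eq hm (hf.integrable one_le_two)
      (fun s _ hμs => integrableOn_condExpL2_of_measure_ne_top hm hμs.ne F)
      (fun s hs hμs => (integral_condExpL2_eq hm F hs hμs.ne).trans
        (integral_congr_ae (ae_restrict_of_ae hcoe)))
      (aestronglyMeasurable_condExpL2 hm F)
  have h2 : eLpNorm (μ[f|m]) 2 μ ≤ eLpNorm f 2 μ := by
    calc eLpNorm (μ[f|m]) 2 μ = eLpNorm (condExpL2 E ℝ hm F : α → E) 2 μ :=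
          (eLpNorm_congr_ae h1).symm
      _ ≤ eLpNorm (⇑F) 2 μ := eLpNorm_condExpL2_le hm F
      _ = eLpNorm f 2 μ := eLpNorm_congr_ae hcoe
  have key : ∀ g : α → E, ∫⁻ a, (‖g a‖₊ : ℝ≥0∞) ^ 2 ∂μ = (eLpNorm g 2 μ) ^ (2:ℝ) := by
    intro g
    rw [eLpNorm_eq_lintegral_rpow_enorm_toReal two_ne_zero ENNReal.ofNat_ne_top, ← ENNReal.rpow_mul]
    norm_num
    rfl
  rw [key, key]
  exact ENNReal.rpow_le_rpow h2 (by norm_num)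

lemma aux_straddle {E : Type*} [NormedAddCommGroup E] [NormedSpace ℝ E]
    {g : ℝ → E} {L : E} {t : ℝ} (h : HasDerivAt g L t)
    {a b : ℕ → ℝ} (ha : ∀ n, a n ≤ t) (hb : ∀ n, t ≤ b n) (hlt : ∀ n, a n < b n)
    (hab : Tendsto (fun n => b n - a n) atTop (𝓝 0)) :
    Tendsto (fun n => (b n - a n)⁻¹ • (g (b n) - g (a n))) atTop (𝓝 L) := by
  rw [Metric.tendsto_atTop]
  intro ε hε
  have hev := (hasDerivAt_iff_isLittleO.mp h).def (show (0:ℝ) < ε/3 by linarith)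
  rw [Metric.eventually_nhds_iff] at hev
  obtain ⟨δ, hδpos, hδ⟩ := hev
  obtain ⟨N, hN⟩ := eventually_atTop.mp (hab.eventually (gt_mem_nhds hδpos))
  refine ⟨N, fun n hn => ?_⟩
  have hwpos : 0 < b n - a n := sub_pos.2 (hlt n)
  have h1 : dist (a n) t < δ := by
    rw [Real.dist_eq, abs_of_nonpos (by linarith [ha n])]
    have := hN n hn; linarith [hb n]
  have h2 : dist (b n) t < δ := by
    rw [Real.dist_eq, abs_of_nonneg (by linarith [hb n])]
    have := hN n hn; linarith [ha n]
  have e1 := hδ h2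
  have e2 := hδ h1
  rw [Real.norm_eq_abs, abs_of_nonneg (by linarith [hb n])] at e1
  rw [Real.norm_eq_abs, abs_of_nonpos (by linarith [ha n])] at e2
  rw [dist_eq_norm]
  have hdiff : (g (b n) - g t - (b n - t) • L) - (g (a n) - g t - (a n - t) • L)
      = (g (b n) - g (a n)) - (b n - a n) • L := by
    rw [sub_smul, sub_smul, sub_smul]
    abel
  have key : (b n - a n)⁻¹ • (g (b n) - g (a n)) - L
      = (b n - a n)⁻¹ • ((g (b n) - g t - (b n - t) • L) - (g (a n) - g t - (a n - t) • L)) := by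
    rw [hdiff]
    simp only [smul_sub, smul_smul]
    rw [inv_mul_cancel₀ hwpos.ne', one_smul]
  rw [key, norm_smul, norm_inv, Real.norm_eq_abs, abs_of_pos hwpos]
  have hbound : ‖(g (b n) - g t - (b n - t) • L) - (g (a n) - g t - (a n - t) • L)‖
      ≤ ε/3 * (b n - t) + ε/3 * (t - a n) := by
    refine (norm_sub_le _ _).trans ?_
    gcongr <;> linarith [e1, e2]
  calc (b n - a n)⁻¹ * ‖(g (b n) - g t - (b n - t) • L) - (g (a n) - g t - (a n - t) • L)‖
      ≤ (b n - a n)⁻¹ * (ε/3 * (b n - a n)) := by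
        refine mul_le_mul_of_nonneg_left ?_ (by positivity)
        refine hbound.trans (le_of_eq ?_); ring
    _ = ε/3 := by field_simp
    _ < ε := by linarith

/-- For any coupling `q` of `q0, q1` with finite second moments, the flow
`φ` of the marginal vector field `u_t(x) = E_q[x1 − x0 | t x1 + (1−t) x0 = x]` satisfies
`E_{q0} ‖φ_1(x0) − x0‖² ≤ E_q ‖x1 − x0‖²`. -/
theorem flow_transport_cost_le_coupling_cost
    {d : ℕ}
    (q0 q1 : Measure (EuclideanSpace ℝ (Fin d)))
    [IsProbabilityMeasure q0] [IsProbabilityMeasure q1]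
    -- `q` is a coupling of `q0` and `q1` with finite second moments
    (q : Measure (EuclideanSpace ℝ (Fin d) × EuclideanSpace ℝ (Fin d)))
    [IsProbabilityMeasure q]
    (hqfst : q.fst = q0) (hqsnd : q.snd = q1)
    (hmoment : Integrable (fun p : EuclideanSpace ℝ (Fin d) × EuclideanSpace ℝ (Fin d) =>
      ‖p.1‖^2 + ‖p.2‖^2) q)
    -- the marginal vector field `u_t(x) = E_q[x1 − x0 | t x1 + (1−t) x0 = x]`
    (u : ℝ → EuclideanSpace ℝ (Fin d) → EuclideanSpace ℝ (Fin d))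
    (hu : ∀ t ∈ Set.Icc (0:ℝ) 1,
      (fun p : EuclideanSpace ℝ (Fin d) × EuclideanSpace ℝ (Fin d) =>
          u t ((1-t) • p.1 + t • p.2))
        =ᵐ[q] MeasureTheory.condExp
          (MeasurableSpace.comap
            (fun p : EuclideanSpace ℝ (Fin d) × EuclideanSpace ℝ (Fin d) =>
              (1-t) • p.1 + t • p.2) (by infer_instance))
          q (fun p => p.2 - p.1))
    -- the flow `φ` of `u`
    (φ : ℝ → EuclideanSpace ℝ (Fin d) → EuclideanSpace ℝ (Fin d))
    (hφ0 : ∀ x0, φ 0 x0 = x0)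
    (hode : ∀ x0, ∀ t ∈ Set.Icc (0:ℝ) 1,
      HasDerivAt (fun s => φ s x0) (u t (φ t x0)) t)
    -- the pushforward of `q0` under `φ_t` is the law of `t x1 + (1−t) x0` under `q`
    (hgen : ∀ t ∈ Set.Icc (0:ℝ) 1,
      q0.map (φ t) = q.map (fun p => (1-t) • p.1 + t • p.2)) :
    ∫ x0, ‖φ 1 x0 - x0‖^2 ∂q0 ≤ ∫ p, ‖p.2 - p.1‖^2 ∂q := by
  classical
  -- basic measurability of the interpolation maps
  have heM : ∀ t : ℝ, Measurable (fun p : EuclideanSpace ℝ (Fin d) × EuclideanSpace ℝ (Fin d) =>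
      (1-t) • p.1 + t • p.2) := fun t => by fun_prop
  have heC : ∀ t : ℝ, Continuous (fun p : EuclideanSpace ℝ (Fin d) × EuclideanSpace ℝ (Fin d) =>
      (1-t) • p.1 + t • p.2) := fun t => by fun_prop
  -- a.e.-measurability of the flow maps
  have hφae : ∀ t ∈ Set.Icc (0:ℝ) 1, AEMeasurable (φ t) q0 := by
    intro t ht
    by_contra hc
    have h0 := hgen t ht
    rw [Measure.map_of_not_aemeasurable hc] at h0
    haveI := Measure.isProbabilityMeasure_map (μ := q) (heM t).aemeasurable
    have h1 : (q.map (fun p : EuclideanSpace ℝ (Fin d) × EuclideanSpace ℝ (Fin d) =>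
        (1-t) • p.1 + t • p.2)) Set.univ = 1 := measure_univ
    rw [← h0] at h1
    simp at h1
  -- second moment of the coupling, in `ℝ≥0∞` form
  set Cnn : ℝ≥0∞ := ∫⁻ p : EuclideanSpace ℝ (Fin d) × EuclideanSpace ℝ (Fin d),
      (‖p.2 - p.1‖₊ : ℝ≥0∞) ^ 2 ∂q with hCnn_def
  have hptw : ∀ p : EuclideanSpace ℝ (Fin d) × EuclideanSpace ℝ (Fin d),
      (‖p.2 - p.1‖₊ : ℝ≥0∞) ^ 2 ≤ 2 * (‖‖p.1‖^2 + ‖p.2‖^2‖₊ : ℝ≥0∞) := by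
    intro p
    have hreal : ‖p.2 - p.1‖^2 ≤ 2*(‖p.1‖^2+‖p.2‖^2) := by
      nlinarith [norm_sub_le p.2 p.1, norm_nonneg p.1, norm_nonneg p.2,
        sq_nonneg (‖p.1‖-‖p.2‖), sq_nonneg (‖p.1‖+‖p.2‖), norm_nonneg (p.2-p.1)]
    have h2 : ((‖p.2-p.1‖₊:ℝ≥0∞))^2 = ENNReal.ofReal (‖p.2-p.1‖^2) := by
      rw [← enorm_eq_nnnorm, ← ofReal_norm, ← ENNReal.ofReal_pow (norm_nonneg _)]
    have h3 : (‖‖p.1‖^2+‖p.2‖^2‖₊ : ℝ≥0∞) = ENNReal.ofReal (‖p.1‖^2+‖p.2‖^2) := by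
      rw [← enorm_eq_nnnorm, ← ofReal_norm, Real.norm_eq_abs, abs_of_nonneg (by positivity)]
    rw [h2, h3]
    refine le_trans (ENNReal.ofReal_le_ofReal hreal) ?_
    rw [ENNReal.ofReal_mul (by norm_num : (0:ℝ) ≤ 2)]
    gcongr
    norm_num
  have hCnnfin : Cnn ≠ ⊤ := by
    have h1 : Cnn ≤ 2 * ∫⁻ p, (‖‖p.1‖^2+‖p.2‖^2‖₊ : ℝ≥0∞) ∂q := by
      rw [← lintegral_const_mul' _ _ (by norm_num : (2:ℝ≥0∞) ≠ ⊤)]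
      exact lintegral_mono hptw
    have h2 := hmoment.2
    rw [HasFiniteIntegral] at h2
    exact (h1.trans_lt (ENNReal.mul_lt_top (by norm_num) h2)).ne
  have hMem : MemLp (fun p : EuclideanSpace ℝ (Fin d) × EuclideanSpace ℝ (Fin d) =>
      p.2 - p.1) 2 q := by
    refine ⟨(measurable_snd.sub measurable_fst).aestronglyMeasurable, ?_⟩
    rw [eLpNorm_eq_lintegral_rpow_enorm_toReal two_ne_zero ENNReal.ofNat_ne_top]
    refine ENNReal.rpow_lt_top_of_nonneg (by norm_num) ?_
    have heq : ∫⁻ p : EuclideanSpace ℝ (Fin d) × EuclideanSpace ℝ (Fin d),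
        (‖p.2-p.1‖₊:ℝ≥0∞) ^ ((2:ℝ≥0∞)).toReal ∂q = Cnn := by
      rw [hCnn_def]
      refine lintegral_congr fun p => ?_
      rw [← ENNReal.rpow_natCast]
      norm_num
    exact ne_of_eq_of_ne heq hCnnfin
  -- Step A : per-time bound via the conditional expectation
  have hA : ∀ t ∈ Set.Icc (0:ℝ) 1,
      ∫⁻ x, (‖u t (φ t x)‖₊ : ℝ≥0∞) ^ 2 ∂q0 ≤ Cnn := by
    intro t ht
    have hm : MeasurableSpace.comap
        (fun p : EuclideanSpace ℝ (Fin d) × EuclideanSpace ℝ (Fin d) =>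
          (1-t) • p.1 + t • p.2) inferInstance ≤
        (inferInstance : MeasurableSpace
          (EuclideanSpace ℝ (Fin d) × EuclideanSpace ℝ (Fin d))) := (heM t).comap_le
    set h' : EuclideanSpace ℝ (Fin d) → EuclideanSpace ℝ (Fin d) := fun y =>
      ∫ z, z ∂((condDistrib
        (fun p : EuclideanSpace ℝ (Fin d) × EuclideanSpace ℝ (Fin d) => p.2 - p.1)
        (fun p : EuclideanSpace ℝ (Fin d) × EuclideanSpace ℝ (Fin d) =>
          (1-t) • p.1 + t • p.2) q) y) with hh'
    have hh'm : StronglyMeasurable h' := by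
      have hsm : StronglyMeasurable
          (Function.uncurry fun (_ z : EuclideanSpace ℝ (Fin d)) => z) :=
        measurable_snd.stronglyMeasurable
      exact hsm.integral_kernel_prod_right
    have hrep := condExp_ae_eq_integral_condDistrib'
      (μ := q)
      (X := fun p : EuclideanSpace ℝ (Fin d) × EuclideanSpace ℝ (Fin d) =>
        (1-t) • p.1 + t • p.2)
      (Y := fun p : EuclideanSpace ℝ (Fin d) × EuclideanSpace ℝ (Fin d) => p.2 - p.1)
      (heM t) (hMem.integrable one_le_two)
    have hkey : (fun p : EuclideanSpace ℝ (Fin d) × EuclideanSpace ℝ (Fin d) =>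
        u t ((1-t) • p.1 + t • p.2)) =ᵐ[q]
        (fun p => h' ((1-t) • p.1 + t • p.2)) := (hu t ht).trans hrep
    set B := {y : EuclideanSpace ℝ (Fin d) | u t y ≠ h' y} with hB
    have hqB : q ((fun p : EuclideanSpace ℝ (Fin d) × EuclideanSpace ℝ (Fin d) =>
        (1-t) • p.1 + t • p.2) ⁻¹' B) = 0 := by
      have h0 := hkey
      rw [Filter.EventuallyEq, ae_iff] at h0
      exact h0
    have hmapB : (q.map (fun p : EuclideanSpace ℝ (Fin d) × EuclideanSpace ℝ (Fin d) =>
        (1-t) • p.1 + t • p.2)) B = 0 := by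
      obtain ⟨M, hBM, hMm, hM0⟩ := exists_measurable_superset_of_null hqB
      refine le_antisymm ?_ zero_le
      refine ENNReal.le_of_forall_pos_le_add fun ε hε _ => ?_
      rw [zero_add]
      obtain ⟨K, hKM, hKc, hKlt⟩ := hMm.compl.exists_isCompact_lt_add
        (measure_ne_top q _) (ε := (ε:ℝ≥0∞)) (by exact_mod_cast hε.ne')
      set K' := (fun p : EuclideanSpace ℝ (Fin d) × EuclideanSpace ℝ (Fin d) =>
        (1-t) • p.1 + t • p.2) '' K with hK'
      have hK'c : IsCompact K' := hKc.image (heC t)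
      have hK'm : MeasurableSet K' := hK'c.isClosed.measurableSet
      have hdisj : B ⊆ K'ᶜ := by
        intro y hy hyK'
        obtain ⟨p, hpK, rfl⟩ := hyK'
        exact hKM hpK (hBM hy)
      haveI := Measure.isProbabilityMeasure_map (μ := q) (heM t).aemeasurable
        (f := fun p : EuclideanSpace ℝ (Fin d) × EuclideanSpace ℝ (Fin d) =>
          (1-t) • p.1 + t • p.2)
      calc (q.map (fun p : EuclideanSpace ℝ (Fin d) × EuclideanSpace ℝ (Fin d) =>
            (1-t) • p.1 + t • p.2)) B
          ≤ (q.map (fun p : EuclideanSpace ℝ (Fin d) × EuclideanSpace ℝ (Fin d) =>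
            (1-t) • p.1 + t • p.2)) K'ᶜ := measure_mono hdisj
        _ = 1 - (q.map (fun p : EuclideanSpace ℝ (Fin d) × EuclideanSpace ℝ (Fin d) =>
            (1-t) • p.1 + t • p.2)) K' := by
            rw [measure_compl hK'm (measure_ne_top _ _), measure_univ]
        _ ≤ ε := by
            have h1 : q Mᶜ = 1 := by
              rw [measure_compl hMm (measure_ne_top _ _), hM0, measure_univ, tsub_zero]
            have h2 : (1:ℝ≥0∞) < q K + ε := by rw [← h1]; exact hKlt
            have h3 : q K ≤ (q.map (fun p : EuclideanSpace ℝ (Fin d) × EuclideanSpace ℝ (Fin d) =>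
                (1-t) • p.1 + t • p.2)) K' := by
              rw [Measure.map_apply (heM t) hK'm]
              exact measure_mono (Set.subset_preimage_image _ _)
            refine tsub_le_iff_right.2 ?_
            calc (1:ℝ≥0∞) ≤ q K + ε := h2.le
              _ ≤ (q.map (fun p : EuclideanSpace ℝ (Fin d) × EuclideanSpace ℝ (Fin d) =>
                  (1-t) • p.1 + t • p.2)) K' + ε := by gcongr
              _ = ε + _ := add_comm _ _
    have hq0B : q0 (φ t ⁻¹' B) = 0 := by
      rw [← hgen t ht] at hmapB
      obtain ⟨B₀, hBB₀, hB₀m, hB₀0⟩ := exists_measurable_superset_of_null hmapB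
      refine measure_mono_null (Set.preimage_mono hBB₀) ?_
      rw [← Measure.map_apply_of_aemeasurable (hφae t ht) hB₀m]
      exact hB₀0
    have hae0 : ∀ᵐ x ∂q0, u t (φ t x) = h' (φ t x) := by
      rw [ae_iff]
      exact hq0B
    have hcong : (fun x => ((‖u t (φ t x)‖₊:ℝ≥0∞))^2) =ᵐ[q0]
        (fun x => ((‖h' (φ t x)‖₊:ℝ≥0∞))^2) := by
      filter_upwards [hae0] with x hx
      rw [hx]
    have hw : Measurable fun y : EuclideanSpace ℝ (Fin d) => (‖h' y‖₊:ℝ≥0∞)^2 :=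
      hh'm.measurable.enorm.pow_const 2
    calc ∫⁻ x, (‖u t (φ t x)‖₊:ℝ≥0∞)^2 ∂q0
        = ∫⁻ x, (‖h' (φ t x)‖₊:ℝ≥0∞)^2 ∂q0 := lintegral_congr_ae hcong
      _ = ∫⁻ y, (‖h' y‖₊:ℝ≥0∞)^2 ∂(q0.map (φ t)) :=
          (lintegral_map' hw.aemeasurable (hφae t ht)).symm
      _ = ∫⁻ p, (‖h' ((1-t) • p.1 + t • p.2)‖₊:ℝ≥0∞)^2 ∂q := by
          rw [hgen t ht, lintegral_map hw (heM t)]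
      _ = ∫⁻ p, (‖(q[(fun p : EuclideanSpace ℝ (Fin d) × EuclideanSpace ℝ (Fin d) =>
            p.2 - p.1)|MeasurableSpace.comap
            (fun p : EuclideanSpace ℝ (Fin d) × EuclideanSpace ℝ (Fin d) =>
              (1-t) • p.1 + t • p.2) inferInstance]) p‖₊:ℝ≥0∞)^2 ∂q := by
          refine lintegral_congr_ae ?_
          filter_upwards [hrep] with p hp
          simp only [hh']
          rw [hp]
      _ ≤ ∫⁻ p, (‖p.2 - p.1‖₊:ℝ≥0∞)^2 ∂q := aux_condexp_sq hm hMem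
      _ = Cnn := rfl
  -- measurable dyadic approximations of the flow
  have hgm : ∀ (n : ℕ) (k : ℤ), ∃ g : EuclideanSpace ℝ (Fin d) → EuclideanSpace ℝ (Fin d),
      Measurable g ∧ ((k:ℝ)/2^n ∈ Set.Icc (0:ℝ) 1 → g =ᵐ[q0] φ ((k:ℝ)/2^n)) := by
    intro n k
    by_cases hk : (k:ℝ)/2^n ∈ Set.Icc (0:ℝ) 1
    · exact ⟨(hφae _ hk).mk _, (hφae _ hk).measurable_mk, fun _ => (hφae _ hk).ae_eq_mk.symm⟩
    · exact ⟨fun _ => 0, measurable_const, fun h => absurd h hk⟩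
  choose gm hgmM hgmE using hgm
  have hN : ∀ᵐ x ∂q0, ∀ (n:ℕ) (k:ℤ), (k:ℝ)/2^n ∈ Set.Icc (0:ℝ) 1 →
      gm n k x = φ ((k:ℝ)/2^n) x := by
    rw [ae_all_iff]
    intro n
    rw [ae_all_iff]
    intro k
    by_cases hk : (k:ℝ)/2^n ∈ Set.Icc (0:ℝ) 1
    · filter_upwards [hgmE n k hk] with x hx _ using hx
    · filter_upwards with x hkk using absurd hkk hk
  set Dapp : ℕ → ℝ × EuclideanSpace ℝ (Fin d) → EuclideanSpace ℝ (Fin d) :=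
    fun n z => (2^n : ℝ) • (gm n (⌊2^n * z.1⌋ + 1) z.2 - gm n ⌊2^n * z.1⌋ z.2) with hDapp
  have hDappM : ∀ n, Measurable (Dapp n) := by
    intro n
    have h1 : Measurable fun z : ℝ × EuclideanSpace ℝ (Fin d) => (z.2, (⌊2^n * z.1⌋ : ℤ)) :=
      measurable_snd.prodMk ((measurable_const.mul measurable_fst).floor)
    have h2 : Measurable fun w : EuclideanSpace ℝ (Fin d) × ℤ =>
        gm n (w.2 + 1) w.1 - gm n w.2 w.1 :=
      measurable_from_prod_countable_left fun k => (hgmM n (k+1)).sub (hgmM n k)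
    have := (h2.comp h1).const_smul (2^n : ℝ); exact this
  set vr : Measure ℝ := volume.restrict (Set.Ioo (0:ℝ) 1) with hvr
  have hvru : vr Set.univ = 1 := by
    rw [hvr, Measure.restrict_apply_univ]
    simp [Real.volume_Ioo]
  set Pm : Measure (ℝ × EuclideanSpace ℝ (Fin d)) := vr.prod q0 with hPm
  have hDae : AEMeasurable (fun z : ℝ × EuclideanSpace ℝ (Fin d) => u z.1 (φ z.1 z.2)) Pm := by
    refine aemeasurable_of_tendsto_metrizable_ae atTop (fun n => (hDappM n).aemeasurable) ?_
    have hline : ∀ᵐ z : ℝ × EuclideanSpace ℝ (Fin d) ∂Pm, z.1 ∈ Set.Ioo (0:ℝ) 1 := by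
      rw [ae_iff]
      refine measure_mono_null (fun z hz => (Set.mem_prod.2 ⟨hz, Set.mem_univ _⟩ :
        z ∈ ((Set.Ioo (0:ℝ) 1)ᶜ) ×ˢ Set.univ)) ?_
      rw [hPm, Measure.prod_prod, hvr, Measure.restrict_apply measurableSet_Ioo.compl]
      simp
    have hgood : ∀ᵐ z : ℝ × EuclideanSpace ℝ (Fin d) ∂Pm, ∀ (n:ℕ) (k:ℤ),
        (k:ℝ)/2^n ∈ Set.Icc (0:ℝ) 1 → gm n k z.2 = φ ((k:ℝ)/2^n) z.2 := by
      rw [ae_iff] at hN ⊢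
      obtain ⟨T, hsubT, hTm, hT0⟩ := exists_measurable_superset_of_null hN
      refine measure_mono_null (fun z hz => (Set.mem_prod.2 ⟨Set.mem_univ _, hsubT hz⟩ :
        z ∈ (Set.univ : Set ℝ) ×ˢ T)) ?_
      rw [hPm, Measure.prod_prod, hT0, mul_zero]
    filter_upwards [hline, hgood] with z hz1 hz2
    obtain ⟨t, x⟩ := z
    simp only at hz1 hz2 ⊢
    have h2pos : ∀ n : ℕ, (0:ℝ) < 2^n := fun n => by positivity
    have hedge : ∀ n : ℕ, ((⌊2^n * t⌋:ℝ))/2^n ∈ Set.Icc (0:ℝ) 1 ∧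
        ((⌊2^n * t⌋:ℝ)+1)/2^n ∈ Set.Icc (0:ℝ) 1 := by
      intro n
      have h0 : (0:ℝ) ≤ 2^n * t := mul_nonneg (h2pos n).le hz1.1.le
      have hfl0 : (0:ℤ) ≤ ⌊(2:ℝ)^n * t⌋ := Int.floor_nonneg.2 h0
      have hfl0' : (0:ℝ) ≤ (⌊(2:ℝ)^n * t⌋:ℝ) := by exact_mod_cast hfl0
      have hflub : (⌊(2:ℝ)^n * t⌋:ℝ) + 1 ≤ 2^n := by
        have hlt1 : (2:ℝ)^n * t < ((2^n : ℤ) : ℝ) := by push_cast; nlinarith [hz1.2, h2pos n]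
        have h5 : (⌊(2:ℝ)^n * t⌋ : ℤ) + 1 ≤ (2^n : ℤ) := Int.add_one_le_iff.2 (Int.floor_lt.2 hlt1)
        have h6 : ((⌊(2:ℝ)^n * t⌋ : ℤ) : ℝ) + 1 ≤ ((2^n : ℤ) : ℝ) := by exact_mod_cast h5
        push_cast at h6
        linarith
      constructor
      · exact ⟨div_nonneg hfl0' (h2pos n).le, by rw [div_le_one (h2pos n)]; linarith⟩
      · exact ⟨div_nonneg (by linarith) (h2pos n).le, by rw [div_le_one (h2pos n)]; linarith⟩
    set a : ℕ → ℝ := fun n => (⌊(2:ℝ)^n * t⌋ : ℝ)/2^n with haa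
    set b : ℕ → ℝ := fun n => ((⌊(2:ℝ)^n * t⌋ : ℝ)+1)/2^n with hbb
    have hat : ∀ n, a n ≤ t := by
      intro n
      rw [haa, div_le_iff₀ (h2pos n)]
      rw [mul_comm]
      exact Int.floor_le _
    have hbt : ∀ n, t ≤ b n := by
      intro n
      rw [hbb, le_div_iff₀ (h2pos n)]
      rw [mul_comm]
      exact (Int.lt_floor_add_one _).le
    have hlt : ∀ n, a n < b n := by
      intro n
      rw [haa, hbb, div_lt_div_iff₀ (h2pos n) (h2pos n)]
      nlinarith [h2pos n]
    have hw : ∀ n, b n - a n = (1:ℝ)/2^n := by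
      intro n
      rw [haa, hbb, div_sub_div_same]
      ring_nf
    have htend : Tendsto (fun n => b n - a n) atTop (𝓝 0) := by
      refine Tendsto.congr (fun n => ?_) (tendsto_pow_atTop_nhds_zero_of_lt_one
        (by norm_num : (0:ℝ) ≤ 1/2) (by norm_num : (1/2:ℝ) < 1))
      rw [hw n, div_pow, one_pow]
    have hDval : ∀ n, Dapp n (t, x) = (b n - a n)⁻¹ • (φ (b n) x - φ (a n) x) := by
      intro n
      have e1 := hz2 n ⌊(2:ℝ)^n * t⌋ (by exact_mod_cast (hedge n).1)
      have e2 := hz2 n (⌊(2:ℝ)^n * t⌋ + 1) (by push_cast; exact (hedge n).2)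
      rw [hDapp]
      simp only
      rw [e1, e2, hw n, one_div, inv_inv, haa, hbb]
      push_cast
      ring_nf
    refine Tendsto.congr (fun n => (hDval n).symm) ?_
    exact aux_straddle (hode x t ⟨hz1.1.le, hz1.2.le⟩) hat hbt hlt htend
    -- the squared-norm integrand, jointly a.e. measurable
  have hHae : AEMeasurable (fun z : ℝ × EuclideanSpace ℝ (Fin d) =>
      (‖u z.1 (φ z.1 z.2)‖₊ : ℝ≥0∞) ^ 2) Pm := hDae.enorm.pow_const 2
  have hProd : ∫⁻ z : ℝ × EuclideanSpace ℝ (Fin d),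
      (‖u z.1 (φ z.1 z.2)‖₊ : ℝ≥0∞) ^ 2 ∂Pm ≤ Cnn := by
    rw [hPm, lintegral_prod _ hHae]
    calc ∫⁻ t, ∫⁻ x, (‖u t (φ t x)‖₊ : ℝ≥0∞) ^ 2 ∂q0 ∂vr
        ≤ ∫⁻ _, Cnn ∂vr := by
          refine lintegral_mono_ae ?_
          rw [hvr]
          filter_upwards [ae_restrict_mem measurableSet_Ioo] with t htt
          exact hA t ⟨htt.1.le, htt.2.le⟩
      _ = Cnn := by rw [lintegral_const, hvru, mul_one]
  set HH := hHae.mk _ with hHH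
  have hHm : Measurable HH := hHae.measurable_mk
  have hsec : ∀ᵐ x ∂q0, ∀ᵐ t ∂vr,
      (‖u t (φ t x)‖₊ : ℝ≥0∞) ^ 2 = HH (t, x) := by
    have hqp : MeasurePreserving (Prod.swap) (q0.prod vr) Pm := by
      rw [hPm]; exact Measure.measurePreserving_swap
    have h1 := hqp.quasiMeasurePreserving.ae_eq hHae.ae_eq_mk
    have h2 := Measure.ae_ae_of_ae_prod h1
    refine h2.mono fun x hx => hx.mono fun t ht => ?_
    simpa [Function.comp] using ht
  have hJmeas : Measurable fun x => ∫⁻ t, HH (t, x) ∂vr := hHm.lintegral_prod_left'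
  have hJle : ∫⁻ x, (∫⁻ t, HH (t,x) ∂vr) ∂q0 ≤ Cnn := by
    have heq : ∫⁻ x, (∫⁻ t, HH (t,x) ∂vr) ∂q0 = ∫⁻ z, HH z ∂Pm := by
      rw [hPm, lintegral_prod_symm _ hHm.aemeasurable]
    rw [heq, ← lintegral_congr_ae hHae.ae_eq_mk]
    exact hProd
  have hfinJ : ∀ᵐ x ∂q0, (∫⁻ t, HH (t,x) ∂vr) < ⊤ :=
    ae_lt_top hJmeas (hJle.trans_lt hCnnfin.lt_top).ne
  -- pointwise (in x) estimate
  have hpt : ∀ᵐ x ∂q0, (‖φ 1 x - x‖₊ : ℝ≥0∞) ^ 2 ≤ ∫⁻ t, HH (t, x) ∂vr := by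
    filter_upwards [hsec, hfinJ] with x hx1 hx2
    have hxeq : ∫⁻ t, (‖u t (φ t x)‖₊ : ℝ≥0∞) ^ 2 ∂vr = ∫⁻ t, HH (t,x) ∂vr :=
      lintegral_congr_ae hx1
    rw [← hxeq] at hx2 ⊢
    have hDsm : AEStronglyMeasurable (fun s => u s (φ s x)) vr := by
      refine (stronglyMeasurable_deriv (fun s => φ s x)).aestronglyMeasurable.congr ?_
      rw [hvr, Filter.EventuallyEq, ae_restrict_iff' measurableSet_Ioo]
      filter_upwards with s hs
      exact (hode x s ⟨hs.1.le, hs.2.le⟩).deriv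
    have hDnn : AEMeasurable (fun s => (‖u s (φ s x)‖₊ : ℝ≥0∞)) vr := hDsm.aemeasurable.enorm
    have hfin2 : ∫⁻ s, (‖u s (φ s x)‖₊ : ℝ≥0∞) ∂vr < ⊤ := by
      calc ∫⁻ s, (‖u s (φ s x)‖₊ : ℝ≥0∞) ∂vr
          ≤ ∫⁻ s, (1 + (‖u s (φ s x)‖₊ : ℝ≥0∞) ^ 2) ∂vr :=
            lintegral_mono fun s => aux_le_one_add_sq _
        _ = 1 + ∫⁻ s, (‖u s (φ s x)‖₊ : ℝ≥0∞) ^ 2 ∂vr := by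
            rw [lintegral_add_left measurable_const, lintegral_one, hvru]
        _ < ⊤ := ENNReal.add_lt_top.2 ⟨ENNReal.one_lt_top, hx2⟩
    have hDint : Integrable (fun s => u s (φ s x)) vr := ⟨hDsm, hfin2⟩
    have hIoc : IntervalIntegrable (fun s => u s (φ s x)) volume 0 1 := by
      rw [intervalIntegrable_iff, Set.uIoc_of_le (zero_le_one (α := ℝ))]
      rw [IntegrableOn, ← Measure.restrict_congr_set Ioo_ae_eq_Ioc]
      rw [hvr] at hDint
      exact hDint
    have hFTC : ∫ s in (0:ℝ)..1, u s (φ s x) = φ 1 x - x := by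
      have h := intervalIntegral.integral_eq_sub_of_hasDerivAt
        (f := fun s => φ s x) (f' := fun s => u s (φ s x))
        (fun s hs => hode x s (by rwa [Set.uIcc_of_le (zero_le_one (α := ℝ))] at hs)) hIoc
      rw [h]
      show φ 1 x - φ 0 x = φ 1 x - x
      rw [hφ0]
    have hnorm1 : (‖φ 1 x - x‖₊ : ℝ≥0∞) ≤ ∫⁻ s, (‖u s (φ s x)‖₊ : ℝ≥0∞) ∂vr := by
      rw [← hFTC, intervalIntegral.integral_of_le (zero_le_one (α := ℝ))]
      refine (enorm_integral_le_lintegral_enorm _).trans ?_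
      rw [hvr, ← Measure.restrict_congr_set Ioo_ae_eq_Ioc]
      exact le_rfl
    calc (‖φ 1 x - x‖₊ : ℝ≥0∞) ^ 2
        ≤ (∫⁻ s, (‖u s (φ s x)‖₊ : ℝ≥0∞) ∂vr) ^ 2 := pow_le_pow_left' hnorm1 2
      _ ≤ ∫⁻ s, (‖u s (φ s x)‖₊ : ℝ≥0∞) ^ 2 ∂vr := aux_cs vr hvru hDnn
  -- main `ℝ≥0∞` bound
  have hmain : ∫⁻ x, (‖φ 1 x - x‖₊ : ℝ≥0∞) ^ 2 ∂q0 ≤ Cnn :=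
    (lintegral_mono_ae hpt).trans hJle
  -- conversion to Bochner integrals
  have h01 : (1:ℝ) ∈ Set.Icc (0:ℝ) 1 := ⟨zero_le_one, le_refl 1⟩
  have hsub : AEMeasurable (fun x => φ 1 x - x) q0 := (hφae 1 h01).sub aemeasurable_id
  have hLHS : ∫ x, ‖φ 1 x - x‖^2 ∂q0 = (∫⁻ x, (‖φ 1 x - x‖₊ : ℝ≥0∞) ^ 2 ∂q0).toReal := by
    rw [integral_eq_lintegral_of_nonneg_ae (ae_of_all _ fun x => by positivity)
      ((hsub.norm.pow_const 2).aestronglyMeasurable)]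
    congr 1
    refine lintegral_congr fun x => ?_
    rw [← enorm_eq_nnnorm, ← ofReal_norm, ← ENNReal.ofReal_pow (norm_nonneg _)]
  have hRHS : ∫ p : EuclideanSpace ℝ (Fin d) × EuclideanSpace ℝ (Fin d),
      ‖p.2 - p.1‖^2 ∂q = Cnn.toReal := by
    rw [integral_eq_lintegral_of_nonneg_ae
      (f := fun p : EuclideanSpace ℝ (Fin d) × EuclideanSpace ℝ (Fin d) => ‖p.2 - p.1‖^2)
      (ae_of_all _ fun p => by positivity)
      (((measurable_snd.sub measurable_fst).norm.pow_const 2).aestronglyMeasurable)]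
    rw [hCnn_def]
    congr 1
    refine lintegral_congr fun p => ?_
    rw [← enorm_eq_nnnorm, ← ofReal_norm, ← ENNReal.ofReal_pow (norm_nonneg _)]
  rw [hLHS, hRHS]
  exact ENNReal.toReal_mono hCnnfin hmain
end

section
/- Let u_t be a time-dependent vector field on ℝ^d with flow φ_t, and let q0 be a probability measure on ℝ^d. Define the straightness S = E_{t∼Unif(0,1), x0∼q0}[ ||u_t(φ_t(x0))||² − ||φ_1(x0) − x0||² ]. Then S admits the equivalent expression S = E_{t∼Unif(0,1), x0∼q0} || u_t(φ_t(x0)) − E_{t'∼Unif(0,1)}[ u_{t'}(φ_{t'}(x0)) ] ||²; in particular S ≥ 0, and S = 0 if and only if for q0-almost every x0 the speed u_t(φ_t(x0)) is constant in t, i.e. the trajectory t ↦ φ_t(x0) is a straight line traversed at constant speed. -/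
open MeasureTheory ProbabilityTheory Filter
open scoped ENNReal

section aux

variable {α : Type*} [MeasurableSpace α] {μ : Measure α} [IsProbabilityMeasure μ]

lemma aux_sq_integral_le {g : α → ℝ} (h1 : Integrable g μ)
    (h2 : Integrable (fun a => g a ^ 2) μ) :
    (∫ a, g a ∂μ) ^ 2 ≤ ∫ a, g a ^ 2 ∂μ := by
  set c := ∫ a, g a ∂μ with hc
  have h0 : 0 ≤ ∫ a, (g a - c) ^ 2 ∂μ := integral_nonneg fun a => sq_nonneg _
  have hexp : ∫ a, (g a - c) ^ 2 ∂μ = ∫ a, g a ^ 2 ∂μ - c ^ 2 := by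
    have hpt : ∀ a, (g a - c) ^ 2 = (g a ^ 2 - 2 * c * g a) + c ^ 2 := fun a => by ring
    have i1 : Integrable (fun a => g a ^ 2 - 2 * c * g a) μ := h2.sub (h1.const_mul _)
    have i2 : Integrable (fun a => 2 * c * g a) μ := h1.const_mul _
    rw [integral_congr_ae (Eventually.of_forall hpt),
        integral_add i1 (integrable_const _),
        integral_sub h2 i2, integral_const_mul _ _, integral_const]
    simp only [measure_univ, ENNReal.toReal_one, probReal_univ, one_smul, smul_eq_mul, one_mul, ← hc]
    ring
  linarith [hexp ▸ h0]

variable {F : Type*} [NormedAddCommGroup F] [InnerProductSpace ℝ F] [CompleteSpace F]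

lemma aux_variance {g : α → F} (h1 : Integrable g μ)
    (h2 : Integrable (fun a => ‖g a‖ ^ 2) μ) :
    ∫ a, ‖g a - ∫ b, g b ∂μ‖ ^ 2 ∂μ = (∫ a, ‖g a‖ ^ 2 ∂μ) - ‖∫ b, g b ∂μ‖ ^ 2 := by
  set m := ∫ b, g b ∂μ with hm
  have hpt : ∀ a, ‖g a - m‖ ^ 2 = (‖g a‖ ^ 2 - 2 * (inner ℝ (g a) m : ℝ)) + ‖m‖ ^ 2 := by
    intro a; rw [norm_sub_sq_real]
  have hinner : Integrable (fun a => (inner ℝ (g a) m : ℝ)) μ := h1.inner_const m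
  have hval : ∫ a, (inner ℝ (g a) m : ℝ) ∂μ = ‖m‖ ^ 2 := by
    have h' : ∫ a, (inner ℝ m (g a) : ℝ) ∂μ = (inner ℝ m m : ℝ) := by
      rw [integral_inner h1, ← hm]
    have hcomm : (fun a => (inner ℝ (g a) m : ℝ)) = fun a => (inner ℝ m (g a) : ℝ) :=
      funext fun a => real_inner_comm _ _
    rw [hcomm, h', real_inner_self_eq_norm_sq]
  have i1 : Integrable (fun a => ‖g a‖ ^ 2 - 2 * (inner ℝ (g a) m : ℝ)) μ :=
    h2.sub (hinner.const_mul _)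
  have i2 : Integrable (fun a => 2 * (inner ℝ (g a) m : ℝ)) μ := hinner.const_mul _
  rw [integral_congr_ae (Eventually.of_forall hpt),
      integral_add i1 (integrable_const _),
      integral_sub h2 i2, integral_const_mul _ _, hval, integral_const]
  simp only [measure_univ, ENNReal.toReal_one, probReal_univ, one_smul, smul_eq_mul, one_mul]
  ring

end aux

/-- Let `u` be a time-dependent vector field with flow `φ` and `q0` a
probability measure.  The straightness
`S = E_{t∼U(0,1), x0∼q0}[‖u_t(φ_t(x0))‖² − ‖φ_1(x0) − x0‖²]` equals
`E_{t,x0} ‖u_t(φ_t(x0)) − E_{t'}[u_{t'}(φ_{t'}(x0))]‖²`; in particular `S ≥ 0`, with `S = 0`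
iff for `q0`-a.e. `x0` the speed `u_t(φ_t(x0))` is (a.e.) constant in `t`, i.e. the trajectory
is a straight line traversed at constant speed. -/
theorem straightness_nonneg_eq_zero_iff_straight
    {d : ℕ}
    (q0 : Measure (EuclideanSpace ℝ (Fin d))) [IsProbabilityMeasure q0]
    (u : ℝ → EuclideanSpace ℝ (Fin d) → EuclideanSpace ℝ (Fin d))
    (φ : ℝ → EuclideanSpace ℝ (Fin d) → EuclideanSpace ℝ (Fin d))
    (hφ0 : ∀ x0, φ 0 x0 = x0)
    (hode : ∀ x0, ∀ t ∈ Set.Icc (0:ℝ) 1,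
      HasDerivAt (fun s => φ s x0) (u t (φ t x0)) t)
    -- all expectations are assumed finite
    (hint : Integrable
      (fun p : ℝ × EuclideanSpace ℝ (Fin d) => u p.1 (φ p.1 p.2))
      ((volume.restrict (Set.Ioc (0:ℝ) 1)).prod q0))
    (hint2 : Integrable
      (fun p : ℝ × EuclideanSpace ℝ (Fin d) => ‖u p.1 (φ p.1 p.2)‖^2)
      ((volume.restrict (Set.Ioc (0:ℝ) 1)).prod q0))
    -- the straightness of the flow
    (S : ℝ)
    (hS : S = ∫ t in Set.Ioc (0:ℝ) 1,
      ∫ x0, (‖u t (φ t x0)‖^2 - ‖φ 1 x0 - x0‖^2) ∂q0) :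
    S = (∫ t in Set.Ioc (0:ℝ) 1, ∫ x0,
        ‖u t (φ t x0) - ∫ t' in Set.Ioc (0:ℝ) 1, u t' (φ t' x0)‖^2 ∂q0) ∧
    0 ≤ S ∧
    (S = 0 ↔ ∀ᵐ x0 ∂q0, ∀ᵐ t ∂(volume.restrict (Set.Ioc (0:ℝ) 1)),
      u t (φ t x0) = ∫ t' in Set.Ioc (0:ℝ) 1, u t' (φ t' x0)) := by
  set μ := volume.restrict (Set.Ioc (0:ℝ) 1) with hμ
  haveI : IsProbabilityMeasure μ := ⟨by simp [hμ, Real.volume_Ioc]⟩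
  -- measurability of the mean velocity
  have hmmeas : AEStronglyMeasurable
      (fun x0 => ∫ t, u t (φ t x0) ∂μ) q0 := by
    have h := (hint.aestronglyMeasurable.prod_swap).integral_prod_right'
    exact h
  -- a.e. integrability in t
  have hA : ∀ᵐ x0 ∂q0, Integrable (fun t => u t (φ t x0)) μ := hint.prod_left_ae
  have hB : ∀ᵐ x0 ∂q0, Integrable (fun t => ‖u t (φ t x0)‖^2) μ := hint2.prod_left_ae
  -- fundamental theorem of calculus
  have hC : ∀ᵐ x0 ∂q0, φ 1 x0 - x0 = ∫ t, u t (φ t x0) ∂μ := by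
    filter_upwards [hA] with x0 hx
    have hii : IntervalIntegrable (fun t => u t (φ t x0)) volume 0 1 :=
      (intervalIntegrable_iff_integrableOn_Ioc_of_le zero_le_one).mpr hx
    have hftc := intervalIntegral.integral_eq_sub_of_hasDerivAt
      (f := fun s => φ s x0) (f' := fun t => u t (φ t x0))
      (fun t ht => hode x0 t (by rwa [Set.uIcc_of_le zero_le_one] at ht)) hii
    simp only [intervalIntegral.integral_of_le zero_le_one, hφ0] at hftc
    exact hftc.symm
  have haux : Integrable (fun x0 => ∫ t, ‖u t (φ t x0)‖^2 ∂μ) q0 :=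
    hint2.integral_prod_right
  have hm2 : Integrable (fun x0 => ‖∫ t, u t (φ t x0) ∂μ‖^2) q0 := by
    refine Integrable.mono' haux
      ((continuous_pow 2).comp_aestronglyMeasurable hmmeas.norm) ?_
    filter_upwards [hA, hB] with x0 h1 h2
    rw [Real.norm_eq_abs, abs_of_nonneg (by positivity)]
    calc ‖∫ t, u t (φ t x0) ∂μ‖ ^ 2 ≤ (∫ t, ‖u t (φ t x0)‖ ∂μ) ^ 2 :=
          pow_le_pow_left₀ (norm_nonneg _) (norm_integral_le_integral_norm _) 2
      _ ≤ ∫ t, ‖u t (φ t x0)‖ ^ 2 ∂μ := aux_sq_integral_le h1.norm h2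
  have hφint : Integrable (fun x0 => ‖φ 1 x0 - x0‖^2) q0 :=
    hm2.congr (by filter_upwards [hC] with x0 h; rw [h])
  -- integrability of the centered square on the product
  have hGmeas : AEStronglyMeasurable
      (fun p : ℝ × EuclideanSpace ℝ (Fin d) =>
        ‖u p.1 (φ p.1 p.2) - ∫ t, u t (φ t p.2) ∂μ‖^2) (μ.prod q0) :=
    (continuous_pow 2).comp_aestronglyMeasurable
      (hint.aestronglyMeasurable.sub hmmeas.comp_snd).norm
  have hm2' : Integrable
      (fun p : ℝ × EuclideanSpace ℝ (Fin d) => ‖∫ t, u t (φ t p.2) ∂μ‖^2)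
      (μ.prod q0) := by
    rw [integrable_prod_iff (((continuous_pow 2).comp_aestronglyMeasurable
      hmmeas.norm).comp_snd)]
    refine ⟨Eventually.of_forall fun t => hm2, ?_⟩
    have : ∀ t : ℝ, ∫ x0, ‖(‖∫ s, u s (φ s x0) ∂μ‖^2)‖ ∂q0
        = ∫ x0, ‖∫ s, u s (φ s x0) ∂μ‖^2 ∂q0 := by
      intro t
      refine integral_congr_ae (Eventually.of_forall fun x0 => ?_)
      simp only [Real.norm_eq_abs]
      exact abs_of_nonneg (by positivity)
    refine (integrable_const (∫ x0, ‖∫ s, u s (φ s x0) ∂μ‖^2 ∂q0)).congr ?_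
    exact Eventually.of_forall fun t => (this t).symm
  have hGint : Integrable
      (fun p : ℝ × EuclideanSpace ℝ (Fin d) =>
        ‖u p.1 (φ p.1 p.2) - ∫ t, u t (φ t p.2) ∂μ‖^2) (μ.prod q0) := by
    have hbound : Integrable (fun p : ℝ × EuclideanSpace ℝ (Fin d) =>
        2 * ‖u p.1 (φ p.1 p.2)‖ ^ 2 + 2 * ‖∫ t, u t (φ t p.2) ∂μ‖ ^ 2) (μ.prod q0) :=
      (hint2.const_mul 2).add (hm2'.const_mul 2)
    refine Integrable.mono' hbound hGmeas ?_
    refine Eventually.of_forall fun p => ?_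
    rw [Real.norm_eq_abs, abs_of_nonneg (by positivity)]
    have h := norm_sub_le (u p.1 (φ p.1 p.2)) (∫ t, u t (φ t p.2) ∂μ)
    have h2 : ‖u p.1 (φ p.1 p.2) - ∫ t, u t (φ t p.2) ∂μ‖ ^ 2
        ≤ (‖u p.1 (φ p.1 p.2)‖ + ‖∫ t, u t (φ t p.2) ∂μ‖) ^ 2 :=
      pow_le_pow_left₀ (norm_nonneg _) h 2
    nlinarith [sq_nonneg (‖u p.1 (φ p.1 p.2)‖ - ‖∫ t, u t (φ t p.2) ∂μ‖)]
  have hGae : ∀ᵐ x0 ∂q0,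
      Integrable (fun t => ‖u t (φ t x0) - ∫ t', u t' (φ t' x0) ∂μ‖^2) μ :=
    hGint.prod_left_ae
  -- variance identity
  have hV : ∀ᵐ x0 ∂q0,
      ∫ t, ‖u t (φ t x0) - ∫ t', u t' (φ t' x0) ∂μ‖^2 ∂μ
        = (∫ t, ‖u t (φ t x0)‖^2 ∂μ) - ‖∫ t', u t' (φ t' x0) ∂μ‖^2 := by
    filter_upwards [hA, hB] with x0 h1 h2 using aux_variance h1 h2
  have hVint : Integrable
      (fun x0 => ∫ t, ‖u t (φ t x0) - ∫ t', u t' (φ t' x0) ∂μ‖^2 ∂μ) q0 :=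
    (haux.sub hm2).congr
      (by filter_upwards [hV] with x0 h; simp only [Pi.sub_apply]; rw [h])
  -- key computation: S = ∫ x0, variance
  have hSkey : S = ∫ x0, (∫ t, ‖u t (φ t x0) - ∫ t', u t' (φ t' x0) ∂μ‖^2 ∂μ) ∂q0 := by
    rw [hS]
    have hsplit : ∀ᵐ t ∂μ, ∫ x0, (‖u t (φ t x0)‖^2 - ‖φ 1 x0 - x0‖^2) ∂q0
        = (∫ x0, ‖u t (φ t x0)‖^2 ∂q0) - ∫ x0, ‖φ 1 x0 - x0‖^2 ∂q0 := by
      filter_upwards [hint2.prod_right_ae] with t ht using integral_sub ht hφint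
    rw [integral_congr_ae hsplit,
        integral_sub hint2.integral_prod_left (integrable_const _),
        integral_const]
    simp only [measure_univ, ENNReal.toReal_one, probReal_univ, one_smul]
    rw [integral_integral_swap hint2]
    have hCint : ∫ x0, ‖φ 1 x0 - x0‖^2 ∂q0
        = ∫ x0, ‖∫ t', u t' (φ t' x0) ∂μ‖^2 ∂q0 :=
      integral_congr_ae (by filter_upwards [hC] with x0 h; rw [h])
    rw [hCint, ← integral_sub haux hm2]
    refine integral_congr_ae ?_
    filter_upwards [hV] with x0 h
    rw [h]
  have hswap : (∫ t, ∫ x0, ‖u t (φ t x0) - ∫ t', u t' (φ t' x0) ∂μ‖^2 ∂q0 ∂μ)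
      = ∫ x0, ∫ t, ‖u t (φ t x0) - ∫ t', u t' (φ t' x0) ∂μ‖^2 ∂μ ∂q0 :=
    integral_integral_swap hGint
  refine ⟨by rw [hSkey, ← hswap], ?_, ?_⟩
  · rw [hSkey]
    exact integral_nonneg fun x0 => integral_nonneg fun t => by positivity
  · constructor
    · intro h0
      have hz := (integral_eq_zero_iff_of_nonneg
        (fun x0 => integral_nonneg fun t => by positivity) hVint).mp (hSkey ▸ h0)
      filter_upwards [hz, hGae] with x0 hx0 hintx
      have hz2 := (integral_eq_zero_iff_of_nonneg
        (fun t => by positivity) hintx).mp hx0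
      filter_upwards [hz2] with t ht
      have ht' : ‖u t (φ t x0) - ∫ t', u t' (φ t' x0) ∂μ‖^2 = 0 := by simpa using ht
      exact sub_eq_zero.mp (norm_eq_zero.mp (pow_eq_zero_iff two_ne_zero |>.mp ht'))
    · intro hconst
      rw [hSkey]
      have hz : ∀ᵐ x0 ∂q0,
          (∫ t, ‖u t (φ t x0) - ∫ t', u t' (φ t' x0) ∂μ‖^2 ∂μ) = 0 := by
        filter_upwards [hconst] with x0 hx0
        rw [integral_congr_ae (g := fun _ => (0:ℝ))
          (by filter_upwards [hx0] with t ht; rw [ht]; simp)]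
        simp
      rw [integral_congr_ae hz]
      simp
end
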